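/- arXiv:2401.00194 — 8 statements merged into one kernel-verified Lean document; each statement's English description precedes it below -/
import Mathlib

section
/- The modulo-DFT sensing model is identifiable on ℂ^N_𝒱 if and only if for every monic irreducible factor c of the polynomial X^N − 1 in ℚ(i)[X], there exists n ∈ 𝒱 such that c(exp(2πi·n/N)) = 0 (equivalently, with c₁,…,c_K the monic irreducible factors of X^N−1 over ℚ(i) and 𝒩_k = {n ∈ {0,…,N−1} : c_k(exp(2πi·n/N)) = 0}, one has 𝒩_k ∩ 𝒱 ≠ ∅ for every k ∈ {1,…,K}). -/
/-!
Write `ω = exp(2πi/N)`. Two signals give the same modulo measurements iff their difference `s`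
has `F s = g` with `g` a Gaussian-integer vector, and inverting the DFT gives
`√N · s n = G(ωⁿ)` for `G = ∑ g m Xᵐ`. Clearing denominators, identifiability therefore says
that no nonzero `p ∈ ℚ(i)[X]` of degree `< N` vanishes at every `ωⁿ` with `n ∈ 𝒱`.
If each irreducible factor of `Xᴺ - 1` has a root `ωⁿ` with `n ∈ 𝒱`, then the minimal
polynomial of any `ωᵐ` is also that of some `ωⁿ`, `n ∈ 𝒱`, and so divides `p`; thus `p`
vanishes at all `N` distinct powers of `ω` and is zero. If some factor `c` has no such root, `(Xᴺ - 1) / c` is a nonzero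
polynomial of degree `< N` vanishing at every `ωⁿ`, `n ∈ 𝒱`.
-/

open Polynomial IntermediateField

noncomputable def dft (N : ℕ) : Matrix (Fin N) (Fin N) ℂ :=
  Matrix.of fun n₁ n₂ : Fin N => (1 / Real.sqrt N : ℂ) *
    Complex.exp (-(2 * Real.pi * Complex.I * (n₁ : ℕ) * (n₂ : ℕ)) / N)

/-- A complex number is a Gaussian integer if its real and imaginary parts are integers. -/
def IsGaussianInt (z : ℂ) : Prop := ∃ a b : ℤ, z = (a : ℂ) + (b : ℂ) * Complex.I

/-- Identifiability of the modulo-DFT sensing model on `ℂ^N_𝒱`: any two signals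
supported off `𝒱` whose DFT images differ by a Gaussian integer vector coincide. -/
def ModuloDFTIdentifiable (N : ℕ) (V : Set ℕ) : Prop :=
  ∀ s s' : Fin N → ℂ,
    (∀ n : Fin N, (n : ℕ) ∈ V → s n = 0) →
    (∀ n : Fin N, (n : ℕ) ∈ V → s' n = 0) →
    (∀ m : Fin N, IsGaussianInt ((dft N).mulVec s m - (dft N).mulVec s' m)) →
    s = s'

open scoped Matrix

lemma IsGaussianInt.mem_adjoin_I {z : ℂ} (hz : IsGaussianInt z) : z ∈ ℚ⟮Complex.I⟯ := by
  obtain ⟨a, b, rfl⟩ := hz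
  exact add_mem (intCast_mem _ a) (mul_mem (intCast_mem _ b) (mem_adjoin_simple_self ℚ _))

lemma IsGaussianInt.natCast_mul (k : ℕ) {z : ℂ} (hz : IsGaussianInt z) :
    IsGaussianInt (k * z) := by
  obtain ⟨a, b, rfl⟩ := hz
  exact ⟨k * a, k * b, by push_cast; ring⟩

lemma exists_rat_eq_of_mem_adjoin_I {z : ℂ} (hz : z ∈ ℚ⟮Complex.I⟯) :
    ∃ a b : ℚ, z = a + b * Complex.I := by
  have hI : IsIntegral ℚ Complex.I := ⟨X ^ 2 + 1, monic_X_pow_add_C 1 two_ne_zero, by simp⟩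
  rw [← mem_toSubalgebra, adjoin_simple_toSubalgebra_of_isAlgebraic hI.isAlgebraic] at hz
  induction hz using Algebra.adjoin_induction with
  | mem x hx => exact ⟨0, 1, by simp [Set.mem_singleton_iff.mp hx]⟩
  | algebraMap r => exact ⟨r, 0, by simp⟩
  | add x y _ _ hx hy =>
    obtain ⟨⟨a, b, rfl⟩, ⟨c, d, rfl⟩⟩ := And.intro hx hy
    exact ⟨a + c, b + d, by push_cast; ring⟩
  | mul x y _ _ hx hy =>
    obtain ⟨⟨a, b, rfl⟩, ⟨c, d, rfl⟩⟩ := And.intro hx hy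
    refine ⟨a * c - b * d, a * d + b * c, ?_⟩
    push_cast
    linear_combination (b * d : ℂ) * Complex.I_sq

lemma exists_natCast_mul_isGaussianInt {z : ℂ} (hz : z ∈ ℚ⟮Complex.I⟯) :
    ∃ D : ℕ, D ≠ 0 ∧ IsGaussianInt (D * z) := by
  obtain ⟨a, b, rfl⟩ := exists_rat_eq_of_mem_adjoin_I hz
  have ha : (a : ℂ) * a.den = a.num := by exact_mod_cast a.mul_den_eq_num
  have hb : (b : ℂ) * b.den = b.num := by exact_mod_cast b.mul_den_eq_num
  refine ⟨a.den * b.den, by positivity, a.num * b.den, b.num * a.den, ?_⟩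
  push_cast
  linear_combination (b.den : ℂ) * ha + (a.den * Complex.I) * hb

lemma exists_natCast_mul_forall_isGaussianInt {ι : Type*} [Fintype ι] (g : ι → ℚ⟮Complex.I⟯) :
    ∃ D : ℕ, D ≠ 0 ∧ ∀ i, IsGaussianInt (D * g i) := by
  choose D hD hG using fun i ↦ exists_natCast_mul_isGaussianInt (g i).2
  refine ⟨∏ i, D i, Finset.prod_ne_zero_iff.mpr fun i _ ↦ hD i, fun i ↦ ?_⟩
  obtain ⟨k, hk⟩ := Finset.dvd_prod_of_mem D (Finset.mem_univ i)
  rw [hk, Nat.cast_mul, mul_comm (D i : ℂ), mul_assoc]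
  exact (hG i).natCast_mul k

lemma forall_isGaussianInt_eq_zero_iff {ι : Type*} [Fintype ι] (W : Submodule ℂ (ι → ℂ)) :
    (∀ g ∈ W, (∀ i, IsGaussianInt (g i)) → g = 0) ↔
      ∀ g : ι → ℚ⟮Complex.I⟯, (fun i ↦ algebraMap ℚ⟮Complex.I⟯ ℂ (g i)) ∈ W → g = 0 := by
  constructor
  · intro h g hg
    obtain ⟨D, hD, hG⟩ := exists_natCast_mul_forall_isGaussianInt g
    have h0 := h _ (W.smul_mem (D : ℂ) hg) hG
    funext i
    simpa [hD] using congrFun h0 i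
  · intro h g hg hG
    have h0 := h (fun i ↦ ⟨g i, (hG i).mem_adjoin_I⟩) hg
    funext i
    exact congrArg Subtype.val (congrFun h0 i)

lemma IsPrimitiveRoot.sum_inv_pow_mul_pow {R : Type*} [Field R] {ζ : R} {N : ℕ}
    (hζ : IsPrimitiveRoot ζ N) (a b : Fin N) :
    ∑ k : Fin N, (ζ ^ ((a : ℕ) * k))⁻¹ * ζ ^ ((k : ℕ) * b) = if a = b then (N : R) else 0 := by
  set x := (ζ ^ (a : ℕ))⁻¹ * ζ ^ (b : ℕ)
  have hterm (k : ℕ) : (ζ ^ ((a : ℕ) * k))⁻¹ * ζ ^ (k * b) = x ^ k := by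
    rw [mul_pow, inv_pow, ← pow_mul, ← pow_mul, mul_comm k]
  simp_rw [hterm, Fin.sum_univ_eq_sum_range (x ^ ·)]
  have hζ0 : ζ ≠ 0 := hζ.ne_zero (by have := a.isLt; omega)
  split_ifs with hab
  · simp [x, hab, hζ0]
  · have hx : x ≠ 1 := fun hx ↦ hab <| Fin.ext <| hζ.pow_inj a.isLt b.isLt <|
      (inv_mul_eq_one₀ (pow_ne_zero _ hζ0)).mp hx
    have hxN : x ^ N = 1 := by
      rw [mul_pow, inv_pow, ← pow_mul, ← pow_mul, mul_comm _ N, mul_comm _ N, pow_mul, pow_mul,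
        hζ.pow_eq_one]
      simp
    rw [geom_sum_eq hx, hxN, sub_self, zero_div]

lemma aeval_pow_X_pow_sub_one {K L : Type*} [CommRing K] [CommRing L] [Algebra K L] {ζ : L}
    {N : ℕ} (hζ : ζ ^ N = 1) (m : ℕ) : aeval (ζ ^ m) (X ^ N - 1 : K[X]) = 0 := by
  rw [map_sub, map_pow, aeval_X, map_one, ← pow_mul, mul_comm, pow_mul, hζ, one_pow, sub_self]

lemma exists_ne_zero_degree_lt_of_dvd {K L : Type*} [CommRing K] [IsDomain K] [CommRing L]
    [IsDomain L] [Algebra K L] {q c : K[X]} (hq : q ≠ 0) (hc : 0 < c.natDegree) (hcq : c ∣ q) :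
    ∃ p : K[X], p ≠ 0 ∧ p.degree < q.degree ∧
      ∀ x : L, aeval x q = 0 → aeval x c ≠ 0 → aeval x p = 0 := by
  obtain ⟨p, rfl⟩ := hcq
  have hp : p ≠ 0 := right_ne_zero_of_mul hq
  refine ⟨p, hp, ?_, fun x hx hcx ↦ ?_⟩
  · apply degree_lt_degree
    rw [natDegree_mul (ne_zero_of_natDegree_gt hc) hp]
    omega
  · rw [map_mul] at hx
    exact (mul_eq_zero.mp hx).resolve_left hcx

lemma IsPrimitiveRoot.eq_zero_of_forall_factor {K L : Type*} [Field K] [Field L] [Algebra K L]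
    {ζ : L} {N : ℕ} (hζ : IsPrimitiveRoot ζ N) (hN : 0 < N) {S : Set ℕ}
    (hS : ∀ c : K[X], c.Monic → Irreducible c → c ∣ X ^ N - 1 → ∃ n ∈ S, aeval (ζ ^ n) c = 0)
    {p : K[X]} (hp : p.degree < N) (hpS : ∀ n ∈ S, aeval (ζ ^ n) p = 0) : p = 0 := by
  have hroot := aeval_pow_X_pow_sub_one (K := K) hζ.pow_eq_one
  have hint (m : ℕ) : IsIntegral K (ζ ^ m) :=
    ⟨X ^ N - 1, monic_X_pow_sub_C 1 hN.ne', by simpa using hroot m⟩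
  have hvan (m : ℕ) : aeval (ζ ^ m) p = 0 := by
    have hirr := minpoly.irreducible (hint m)
    obtain ⟨n, hn, hc⟩ := hS _ (minpoly.monic (hint m)) hirr (minpoly.dvd K _ (hroot m))
    have hdvd : minpoly K (ζ ^ m) ∣ p := by
      rw [minpoly.eq_of_irreducible_of_monic hirr hc (minpoly.monic (hint m))]
      exact minpoly.dvd K _ (hpS n hn)
    exact aeval_eq_zero_of_dvd_aeval_eq_zero hdvd (minpoly.aeval K _)
  by_contra hp0
  refine hp0 <| (Polynomial.map_eq_zero_iff (algebraMap K L).injective).mp <|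
    eq_zero_of_natDegree_lt_card_of_eval_eq_zero _ (f := fun m : Fin N ↦ ζ ^ (m : ℕ))
      (fun a b h ↦ Fin.ext (hζ.pow_inj a.isLt b.isLt h)) (fun m ↦ ?_) ?_
  · rw [eval_map_algebraMap, hvan]
  · rw [natDegree_map, Fintype.card_fin, natDegree_lt_iff_degree_lt hp0]
    exact hp

theorem IsPrimitiveRoot.forall_degree_lt_eq_zero_iff {K L : Type*} [Field K] [Field L]
    [Algebra K L] {ζ : L} {N : ℕ} (hζ : IsPrimitiveRoot ζ N) (hN : 0 < N) (S : Set ℕ) :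
    (∀ p : K[X], p.degree < N → (∀ n ∈ S, aeval (ζ ^ n) p = 0) → p = 0) ↔
      ∀ c : K[X], c.Monic → Irreducible c → c ∣ X ^ N - 1 → ∃ n ∈ S, aeval (ζ ^ n) c = 0 := by
  refine ⟨fun h c _ hirr hc ↦ ?_, fun hS p ↦ hζ.eq_zero_of_forall_factor hN hS⟩
  by_contra! hS
  have hXN : (X ^ N - 1 : K[X]) = X ^ N - C 1 := by rw [map_one]
  obtain ⟨p, hp0, hp, hvan⟩ := exists_ne_zero_degree_lt_of_dvd (L := L)
    (hXN ▸ X_pow_sub_C_ne_zero hN 1) hirr.natDegree_pos hc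
  refine hp0 (h p (by rwa [hXN, degree_X_pow_sub_C hN] at hp) fun n hn ↦
    hvan _ (aeval_pow_X_pow_sub_one hζ.pow_eq_one n) (hS n hn))

noncomputable def dftRoot (N : ℕ) : ℂ := Complex.exp (2 * Real.pi * Complex.I / N)

lemma isPrimitiveRoot_dftRoot {N : ℕ} (hN : N ≠ 0) : IsPrimitiveRoot (dftRoot N) N :=
  Complex.isPrimitiveRoot_exp N hN

lemma exp_eq_dftRoot_pow (N n : ℕ) :
    Complex.exp (2 * Real.pi * Complex.I * n / N) = dftRoot N ^ n := by
  rw [dftRoot, ← Complex.exp_nat_mul]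
  ring_nf

lemma dft_apply (N : ℕ) (n m : Fin N) :
    dft N n m = (Real.sqrt N : ℂ)⁻¹ * (dftRoot N ^ ((n : ℕ) * m))⁻¹ := by
  rw [dft, Matrix.of_apply, one_div, ← exp_eq_dftRoot_pow, ← Complex.exp_neg, Nat.cast_mul]
  ring_nf

noncomputable def idft (N : ℕ) : Matrix (Fin N) (Fin N) ℂ :=
  Matrix.of fun n m : Fin N => (Real.sqrt N : ℂ)⁻¹ * dftRoot N ^ ((n : ℕ) * m)

lemma dft_mul_idft {N : ℕ} (hN : N ≠ 0) : dft N * idft N = 1 := by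
  ext a b
  have hsqrt : (Real.sqrt N : ℂ) ^ 2 = N := by
    rw [← Complex.ofReal_pow, Real.sq_sqrt (Nat.cast_nonneg N), Complex.ofReal_natCast]
  calc (dft N * idft N) a b
      = ((Real.sqrt N : ℂ) ^ 2)⁻¹ *
          ∑ k : Fin N, (dftRoot N ^ ((a : ℕ) * k))⁻¹ * dftRoot N ^ ((k : ℕ) * b) := by
        simp only [Matrix.mul_apply, dft_apply, idft, Matrix.of_apply, Finset.mul_sum]
        refine Finset.sum_congr rfl fun k _ ↦ ?_
        ring
    _ = (1 : Matrix (Fin N) (Fin N) ℂ) a b := by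
        rw [(isPrimitiveRoot_dftRoot hN).sum_inv_pow_mul_pow, hsqrt, Matrix.one_apply]
        split_ifs <;> simp [hN]

lemma idft_mul_dft {N : ℕ} (hN : N ≠ 0) : idft N * dft N = 1 :=
  mul_eq_one_comm.mp (dft_mul_idft hN)

lemma idft_mulVec_coeff {K : Type*} [CommSemiring K] [Algebra K ℂ] {N : ℕ} {p : K[X]}
    (hp : p.degree < N) (n : Fin N) :
    (idft N *ᵥ fun m ↦ algebraMap K ℂ (p.coeff m)) n
      = (Real.sqrt N : ℂ)⁻¹ * aeval (dftRoot N ^ (n : ℕ)) p := by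
  have hpN : p.natDegree < N := by
    by_cases hp0 : p = 0
    · simpa [hp0] using n.pos
    · exact (natDegree_lt_iff_degree_lt hp0).mpr hp
  rw [aeval_eq_sum_range' hpN, ← Fin.sum_univ_eq_sum_range, Finset.mul_sum]
  simp only [Matrix.mulVec, dotProduct, idft, Matrix.of_apply, Algebra.smul_def, ← pow_mul]
  refine Finset.sum_congr rfl fun m _ ↦ ?_
  ring

-- The paper's `ℂ^N_𝒱`.
def vanishingOn (N : ℕ) (V : Set ℕ) : Submodule ℂ (Fin N → ℂ) :=
  Submodule.pi {n | (n : ℕ) ∈ V} fun _ ↦ ⊥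

lemma mem_vanishingOn {N : ℕ} {V : Set ℕ} {s : Fin N → ℂ} :
    s ∈ vanishingOn N V ↔ ∀ n : Fin N, (n : ℕ) ∈ V → s n = 0 := by
  simp [vanishingOn, Submodule.mem_pi]

lemma moduloDFTIdentifiable_iff_forall_isGaussianInt {N : ℕ} (hN : N ≠ 0) (V : Set ℕ) :
    ModuloDFTIdentifiable N V ↔ ∀ g ∈ (vanishingOn N V).comap (idft N).mulVecLin,
      (∀ m, IsGaussianInt (g m)) → g = 0 := by
  simp only [Submodule.mem_comap, Matrix.mulVecLin_apply]
  constructor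
  · intro h g hg hG
    have hdft : dft N *ᵥ (idft N *ᵥ g) = g := by
      rw [Matrix.mulVec_mulVec, dft_mul_idft hN, Matrix.one_mulVec]
    have h0 := h _ 0 (mem_vanishingOn.mp hg) (fun _ _ ↦ rfl) (by simpa [hdft] using hG)
    rw [← hdft, h0, Matrix.mulVec_zero]
  · intro h s s' hs hs' hG
    have hidft : idft N *ᵥ (dft N *ᵥ (s - s')) = s - s' := by
      rw [Matrix.mulVec_mulVec, idft_mul_dft hN, Matrix.one_mulVec]
    have hsub : s - s' ∈ vanishingOn N V :=
      sub_mem (mem_vanishingOn.mpr hs) (mem_vanishingOn.mpr hs')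
    have h0 := h (dft N *ᵥ (s - s')) (hidft.symm ▸ hsub) (by simpa [Matrix.mulVec_sub] using hG)
    rw [← sub_eq_zero, ← hidft, h0, Matrix.mulVec_zero]

lemma forall_idft_mem_vanishingOn_eq_zero_iff {K : Type*} [CommSemiring K] [Algebra K ℂ]
    {N : ℕ} {V : Set ℕ} (hV : ∀ n ∈ V, n < N) :
    (∀ g : Fin N → K,
        (fun m ↦ algebraMap K ℂ (g m)) ∈ (vanishingOn N V).comap (idft N).mulVecLin → g = 0) ↔
      ∀ p : K[X], p.degree < N → (∀ n ∈ V, aeval (dftRoot N ^ n) p = 0) → p = 0 := by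
  simp only [Submodule.mem_comap, Matrix.mulVecLin_apply, mem_vanishingOn]
  constructor
  · intro h p hp hvan
    have h0 := h (degreeLTEquiv K N ⟨p, mem_degreeLT.mpr hp⟩) fun n hn ↦ by
      simp [degreeLTEquiv, idft_mulVec_coeff hp, hvan n hn]
    simpa using (degreeLTEquiv K N).map_eq_zero_iff.mp h0
  · intro h g hg
    obtain ⟨p, rfl⟩ := (degreeLTEquiv K N).surjective g
    have hp := mem_degreeLT.mp p.2
    have hp0 : (p : K[X]) = 0 := h p hp fun n hn ↦ by
      have hnN := hV n hn
      simpa [degreeLTEquiv, idft_mulVec_coeff hp, show N ≠ 0 by omega] using hg ⟨n, hnN⟩ hn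
    rw [Submodule.coe_eq_zero.mp hp0, map_zero]

theorem moduloDFTIdentifiable_iff_forall_degree_lt {N : ℕ} (hN : N ≠ 0) {V : Set ℕ}
    (hV : ∀ n ∈ V, n < N) :
    ModuloDFTIdentifiable N V ↔ ∀ p : ℚ⟮Complex.I⟯[X], p.degree < N →
      (∀ n ∈ V, aeval (dftRoot N ^ n) p = 0) → p = 0 := by
  rw [moduloDFTIdentifiable_iff_forall_isGaussianInt hN, forall_isGaussianInt_eq_zero_iff,
    forall_idft_mem_vanishingOn_eq_zero_iff hV]

/-- the modulo-DFT sensing model is identifiable on ℂ^N_𝒱 iff every monic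
irreducible factor of X^N − 1 over ℚ(i) has a root of the form e^{2πin/N} with n ∈ 𝒱. -/
theorem stmt1 (N : ℕ) (hN : 0 < N) (V : Set ℕ) (hV : ∀ n ∈ V, n < N) :
    ModuloDFTIdentifiable N V ↔
      ∀ c : Polynomial ℚ⟮Complex.I⟯, c.Monic → Irreducible c → c ∣ (X ^ N - 1) →
        ∃ n ∈ V, Polynomial.aeval (Complex.exp (2 * Real.pi * Complex.I * n / N)) c = 0 := by
  simp_rw [exp_eq_dftRoot_pow]
  rw [moduloDFTIdentifiable_iff_forall_degree_lt hN.ne' hV,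
    (isPrimitiveRoot_dftRoot hN.ne').forall_degree_lt_eq_zero_iff hN]
end

section
/- Let N be a prime number. The modulo-DFT sensing model is identifiable on ℂ^N_𝒱 if and only if |𝒱| ≥ 2 and 0 ∈ 𝒱. -/
open Polynomial

/-!
Up to the factor `√N`, `dft N` is `ZMod.dft`, so identifiability says that no nonzero
Gaussian-integer vector `Ψ` on `ZMod N` has an inverse transform vanishing on `𝒱`.
If `0 ∉ 𝒱`, the constant vector `1` (whose inverse transform is a spike at `0`) is such a `Ψ`;
if `𝒱 ⊆ {0}`, `δ₀ - δ₁` (whose inverse transform vanishes at `0`) is one.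
Conversely, if `𝓕⁻ Ψ` vanishes at `0` and at some `k ≠ 0`, then `∑ Ψ j = 0` and
`∑ Ψ j * ζ ^ j = 0` for a primitive `N`-th root of unity `ζ`. As `i ∉ ℚ(ζ)`
(compare `φ (lcm 4 N)` with `[ℚ(ζ) : ℚ] = N - 1`), the second relation splits into two rational
ones; the only rational relation among `1, ζ, …, ζ ^ (N - 1)` is `Φ_N(ζ) = 0`, whose coefficients
are all equal, and the first relation forces them to be `0`.
-/

open IntermediateField

theorem Nat.Prime.sub_one_lt_totient_lcm_four {p : ℕ} (hp : p.Prime) :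
    p - 1 < (Nat.lcm 4 p).totient := by
  rcases hp.eq_two_or_odd' with rfl | hodd
  · decide
  have hcop : Nat.Coprime 4 p := hodd.coprime_two_left.pow_left 2
  rw [hcop.lcm_eq_mul, Nat.totient_mul hcop, Nat.totient_prime hp,
    show Nat.totient 4 = 2 by decide]
  have := hp.two_le
  omega

section Cyclotomic

variable {K : Type*} [Field K] [CharZero K] {p : ℕ} [hp : Fact p.Prime] {ζ : K}

theorem IsPrimitiveRoot.exists_eq_C_mul_cyclotomic (hζ : IsPrimitiveRoot ζ p) {P : ℚ[X]}
    (hdeg : P.natDegree < p) (hP : aeval ζ P = 0) : ∃ q : ℚ, P = C q * cyclotomic p ℚ := by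
  obtain ⟨Q, rfl⟩ : cyclotomic p ℚ ∣ P := by
    rw [cyclotomic_eq_minpoly_rat hζ hp.out.pos]
    exact minpoly.dvd ℚ ζ hP
  have hQ : Q.natDegree = 0 := by
    rcases eq_or_ne Q 0 with rfl | hQ
    · rfl
    rw [natDegree_mul (cyclotomic_ne_zero p ℚ) hQ, natDegree_cyclotomic,
      Nat.totient_prime hp.out] at hdeg
    omega
  exact ⟨Q.coeff 0, by rw [mul_comm, ← eq_C_of_natDegree_eq_zero hQ]⟩

theorem Polynomial.coeff_cyclotomic_prime (R : Type*) [Ring R] {i : ℕ} (hi : i < p) :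
    (cyclotomic p R).coeff i = 1 := by
  simp [cyclotomic_prime, coeff_X_pow, hi]

/-- Over `ℚ`, the only linear relations among `1, ζ, …, ζ ^ (p - 1)` are the multiples of
`1 + ζ + ⋯ + ζ ^ (p - 1) = 0`. -/
theorem IsPrimitiveRoot.eq_zero_of_sum_mul_pow_val_eq_zero (hζ : IsPrimitiveRoot ζ p)
    {c : ZMod p → ℚ} (hsum : ∑ j, c j = 0) (hζsum : ∑ j, (c j : K) * ζ ^ j.val = 0) :
    c = 0 := by
  set P : ℚ[X] := ∑ j, C (c j) * X ^ j.val
  have hcoeff (j : ZMod p) : P.coeff j.val = c j := by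
    simp [P, (ZMod.val_injective p).eq_iff]
  have hdeg : P.natDegree < p := by
    refine (natDegree_sum_le_of_forall_le _ _ (n := p - 1) fun j _ ↦ ?_).trans_lt
      (Nat.sub_lt hp.out.pos one_pos)
    exact (natDegree_C_mul_X_pow_le _ _).trans (Nat.le_sub_one_of_lt (ZMod.val_lt j))
  obtain ⟨q, hq⟩ := hζ.exists_eq_C_mul_cyclotomic hdeg (by simpa [P] using hζsum)
  have hc (j : ZMod p) : c j = q := by
    rw [← hcoeff, hq, coeff_C_mul, coeff_cyclotomic_prime ℚ (ZMod.val_lt j), mul_one]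
  have hq0 : q = 0 := by
    simpa [hc, hp.out.ne_zero] using hsum
  funext j
  rw [hc, hq0, Pi.zero_apply]

end Cyclotomic

theorem IntermediateField.eq_zero_of_add_mul_eq_zero {F L : Type*} [Field F] [Field L]
    [Algebra F L] {K : IntermediateField F L} {t x y : L} (ht : t ∉ K) (hx : x ∈ K) (hy : y ∈ K)
    (h : x + y * t = 0) : x = 0 ∧ y = 0 := by
  have hy0 : y = 0 := by
    by_contra hy0
    refine ht ?_
    rw [show t = -x * y⁻¹ by field_simp; linear_combination h]
    exact mul_mem (neg_mem hx) (inv_mem hy)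
  exact ⟨by simpa [hy0] using h, hy0⟩

theorem Complex.I_notMem_adjoin_primitiveRoot {p : ℕ} (hp : p.Prime) {ζ : ℂ}
    (hζ : IsPrimitiveRoot ζ p) : Complex.I ∉ ℚ⟮ζ⟯ := by
  intro hI
  have hint : IsIntegral ℚ ζ := (hζ.isIntegral hp.pos).tower_top
  have : FiniteDimensional ℚ ℚ⟮ζ⟯ := adjoin.finiteDimensional hint
  have h4 : IsPrimitiveRoot (⟨Complex.I, hI⟩ : ℚ⟮ζ⟯) 4 :=
    IsPrimitiveRoot.coe_submonoidClass_iff.mp Complex.isPrimitiveRoot_I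
  have hζ' : IsPrimitiveRoot (⟨ζ, mem_adjoin_simple_self ℚ ζ⟩ : ℚ⟮ζ⟯) p :=
    IsPrimitiveRoot.coe_submonoidClass_iff.mp hζ
  have hle := h4.lcm_totient_le_finrank hζ'
    (cyclotomic.irreducible_rat (Nat.lcm_pos (by norm_num) hp.pos))
  rw [adjoin.finrank hint, ← cyclotomic_eq_minpoly_rat hζ hp.pos, natDegree_cyclotomic,
    Nat.totient_prime hp] at hle
  exact hle.not_gt hp.sub_one_lt_totient_lcm_four

theorem IsGaussianInt.intCast (n : ℤ) : IsGaussianInt n := ⟨n, 0, by simp⟩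

theorem IsPrimitiveRoot.eq_zero_of_isGaussianInt {p : ℕ} [hp : Fact p.Prime] {ζ : ℂ}
    (hζ : IsPrimitiveRoot ζ p) {Ψ : ZMod p → ℂ} (hΨ : ∀ j, IsGaussianInt (Ψ j))
    (hsum : ∑ j, Ψ j = 0) (hζsum : ∑ j, Ψ j * ζ ^ j.val = 0) : Ψ = 0 := by
  choose a b hab using hΨ
  obtain ⟨hsa, hsb⟩ : ∑ j, a j = 0 ∧ ∑ j, b j = 0 := by
    exact_mod_cast (by simpa [hab, Complex.ext_iff] using hsum :
      ∑ j, (a j : ℝ) = 0 ∧ ∑ j, (b j : ℝ) = 0)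
  have hmem (c : ZMod p → ℤ) : ∑ j, (c j : ℂ) * ζ ^ j.val ∈ ℚ⟮ζ⟯ :=
    sum_mem fun j _ ↦ mul_mem (intCast_mem _ _) (pow_mem (mem_adjoin_simple_self ℚ ζ) _)
  obtain ⟨hA, hB⟩ := eq_zero_of_add_mul_eq_zero (Complex.I_notMem_adjoin_primitiveRoot hp.out hζ)
    (hmem a) (hmem b) (by
      rw [← hζsum, Finset.sum_mul, ← Finset.sum_add_distrib]
      exact Finset.sum_congr rfl fun j _ ↦ by rw [hab]; ring)
  have ha := hζ.eq_zero_of_sum_mul_pow_val_eq_zero (c := fun j ↦ (a j : ℚ))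
    (by exact_mod_cast hsa) (by simpa using hA)
  have hb := hζ.eq_zero_of_sum_mul_pow_val_eq_zero (c := fun j ↦ (b j : ℚ))
    (by exact_mod_cast hsb) (by simpa using hB)
  funext j
  simp [hab, show a j = 0 by simpa using congrFun ha j, show b j = 0 by simpa using congrFun hb j]

namespace ZMod

open scoped ZMod

variable {N : ℕ} [NeZero N]

theorem val_finEquiv (n : Fin N) : (finEquiv N n).val = n := by
  cases N with
  | zero => exact (NeZero.ne 0 rfl).elim
  | succ N => rfl

theorem finEquiv_apply (n : Fin N) : finEquiv N n = ((n : ℕ) : ZMod N) := by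
  rw [← natCast_zmod_val (finEquiv N n), val_finEquiv]

theorem stdAddChar_mul_eq_pow (j k : ZMod N) : stdAddChar (j * k) = stdAddChar k ^ j.val := by
  rw [← AddChar.map_nsmul_eq_pow, nsmul_eq_mul, natCast_zmod_val]

theorem isPrimitiveRoot_stdAddChar {p : ℕ} [Fact p.Prime] {k : ZMod p} (hk : k ≠ 0) :
    IsPrimitiveRoot (stdAddChar k) p := by
  have hpow : stdAddChar k ^ p = 1 := by
    rw [← AddChar.map_nsmul_eq_pow, nsmul_eq_mul, natCast_self, zero_mul,
      AddChar.map_zero_eq_one]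
  have hne : stdAddChar k ≠ 1 := by
    rwa [← AddChar.map_zero_eq_one (stdAddChar (N := p)), injective_stdAddChar.ne_iff]
  convert IsPrimitiveRoot.orderOf (stdAddChar k)
  exact (orderOf_eq_prime hpow hne).symm

theorem invDFT_apply_eq_zero_iff (Ψ : ZMod N → ℂ) (k : ZMod N) :
    𝓕⁻ Ψ k = 0 ↔ ∑ j, Ψ j * stdAddChar k ^ j.val = 0 := by
  rw [invDFT_apply, smul_eq_zero, or_iff_right (inv_ne_zero (Nat.cast_ne_zero.mpr (NeZero.ne N)))]
  simp_rw [stdAddChar_mul_eq_pow, smul_eq_mul, mul_comm]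

theorem invDFT_one_apply_of_ne_zero {k : ZMod N} (hk : k ≠ 0) : 𝓕⁻ (fun _ ↦ (1 : ℂ)) k = 0 := by
  simp [invDFT_apply, AddChar.sum_mulShift k (isPrimitive_stdAddChar N), hk]

end ZMod

open scoped ZMod in
theorem dft_mulVec_apply {N : ℕ} [NeZero N] (s : Fin N → ℂ) (m : Fin N) :
    (dft N).mulVec s m =
      (Real.sqrt N : ℂ)⁻¹ * 𝓕 (s ∘ (ZMod.finEquiv N).symm) (ZMod.finEquiv N m) := by
  simp only [Matrix.mulVec, dotProduct, dft, Matrix.of_apply, ZMod.dft_apply, Finset.mul_sum]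
  refine Fintype.sum_equiv (ZMod.finEquiv N).toEquiv _ _ fun n ↦ ?_
  simp only [RingEquiv.toEquiv_eq_coe, EquivLike.coe_coe, Function.comp_apply,
    RingEquiv.symm_apply_apply, smul_eq_mul]
  have hexp : ZMod.stdAddChar (-(ZMod.finEquiv N n * ZMod.finEquiv N m)) =
      Complex.exp (-(2 * Real.pi * Complex.I * m * n) / N) := by
    rw [ZMod.finEquiv_apply, ZMod.finEquiv_apply, ← Nat.cast_mul, ← Int.cast_natCast,
      ← Int.cast_neg, ZMod.stdAddChar_coe]
    congr 1
    push_cast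
    ring
  rw [hexp, one_div]
  ring

theorem moduloDFTIdentifiable_iff_forall_eq_zero {N : ℕ} {V : Set ℕ} :
    ModuloDFTIdentifiable N V ↔ ∀ d : Fin N → ℂ, (∀ n : Fin N, (n : ℕ) ∈ V → d n = 0) →
      (∀ m, IsGaussianInt ((dft N).mulVec d m)) → d = 0 := by
  constructor
  · intro H d hd hG
    exact H d 0 hd (fun _ _ ↦ rfl) (by simpa using hG)
  · intro H s s' hs hs' hG
    refine sub_eq_zero.mp (H (s - s') (fun n hn ↦ by simp [hs n hn, hs' n hn]) ?_)
    simpa [Matrix.mulVec_sub] using hG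

open scoped ZMod in
theorem moduloDFTIdentifiable_iff_invDFT {N : ℕ} [NeZero N] {V : Set ℕ} :
    ModuloDFTIdentifiable N V ↔ ∀ Ψ : ZMod N → ℂ, (∀ j, IsGaussianInt (Ψ j)) →
      (∀ j : ZMod N, j.val ∈ V → 𝓕⁻ Ψ j = 0) → Ψ = 0 := by
  set e := ZMod.finEquiv N
  have hsqrt : (Real.sqrt N : ℂ) ≠ 0 := by
    exact_mod_cast (Real.sqrt_pos.mpr (Nat.cast_pos.mpr (NeZero.pos N))).ne'
  rw [moduloDFTIdentifiable_iff_forall_eq_zero]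
  constructor
  · intro H Ψ hΨ hV
    set d : Fin N → ℂ := fun n ↦ Real.sqrt N * 𝓕⁻ Ψ (e n)
    have hd : d ∘ e.symm = (Real.sqrt N : ℂ) • 𝓕⁻ Ψ := by
      funext j
      simp [d]
    have hdft (m : Fin N) : (dft N).mulVec d m = Ψ (e m) := by
      rw [dft_mulVec_apply, hd, map_smul, LinearEquiv.apply_symm_apply, Pi.smul_apply,
        smul_eq_mul, inv_mul_cancel_left₀ hsqrt]
    have hd0 : d = 0 := H d (fun n hn ↦ by simp [d, hV (e n) (by rwa [ZMod.val_finEquiv])])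
      (fun m ↦ hdft m ▸ hΨ _)
    rw [← LinearEquiv.map_eq_zero_iff (ZMod.dft).symm]
    funext j
    simpa [d, hsqrt] using congrFun hd0 (e.symm j)
  · intro H d hd hG
    have hΨ : (fun j ↦ (dft N).mulVec d (e.symm j)) = (Real.sqrt N : ℂ)⁻¹ • 𝓕 (d ∘ e.symm) := by
      funext j
      simp [dft_mulVec_apply, e]
    have hΨ0 := H _ (fun j ↦ hG _) fun j hj ↦ by
      rw [hΨ, map_smul, LinearEquiv.symm_apply_apply]
      simp [hd (e.symm j) (by rwa [← ZMod.val_finEquiv, RingEquiv.apply_symm_apply])]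
    rw [hΨ, smul_eq_zero, or_iff_right (inv_ne_zero hsqrt), LinearEquiv.map_eq_zero_iff] at hΨ0
    funext n
    simpa using congrFun hΨ0 (e n)

open scoped ZMod in
/-- for prime N, the modulo-DFT sensing model is identifiable on ℂ^N_𝒱 iff
𝒱 has at least two elements and 0 ∈ 𝒱. -/
theorem stmt4 (N : ℕ) (hN : N.Prime) (V : Set ℕ) (hV : ∀ n ∈ V, n < N) :
    ModuloDFTIdentifiable N V ↔ (V.Nontrivial ∧ 0 ∈ V) := by
  have := Fact.mk hN
  rw [moduloDFTIdentifiable_iff_invDFT]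
  constructor
  · intro H
    have h0 : 0 ∈ V := by
      by_contra h0
      refine one_ne_zero (congrFun (H (fun _ ↦ 1) (fun _ ↦ ?_) fun j hj ↦ ?_) 0)
      · exact_mod_cast IsGaussianInt.intCast 1
      · exact ZMod.invDFT_one_apply_of_ne_zero (by rintro rfl; exact h0 (by simpa using hj))
    refine ⟨not_not.mp fun hnt ↦ ?_, h0⟩
    set φ : ZMod N → ℤ := Pi.single 0 1 - Pi.single 1 1
    refine absurd (congrFun (H (fun j ↦ φ j) (fun j ↦ .intCast _) fun j hj ↦ ?_) 0) ?_
    · rw [(ZMod.val_eq_zero j).mp (Set.not_nontrivial_iff.mp hnt hj h0),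
        ZMod.invDFT_apply_eq_zero_iff]
      simp [φ, Pi.single_apply]
    · simp [φ]
  · rintro ⟨hnt, h0⟩ Ψ hΨ hvan
    obtain ⟨k, hk, hk0⟩ := hnt.exists_ne 0
    have hval : (k : ZMod N).val = k := ZMod.val_natCast_of_lt (hV k hk)
    refine (ZMod.isPrimitiveRoot_stdAddChar (k := (k : ZMod N)) ?_).eq_zero_of_isGaussianInt hΨ
      ?_ ?_
    · rintro h
      exact hk0 (by rw [← hval, h, ZMod.val_zero])
    · simpa using (ZMod.invDFT_apply_eq_zero_iff Ψ 0).mp (hvan 0 (by simpa using h0))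
    · exact (ZMod.invDFT_apply_eq_zero_iff Ψ k).mp (hvan k (by rwa [hval]))
end

section
/- Let N = 2p where p ≥ 3 is a prime number. The modulo-DFT sensing model is identifiable on ℂ^N_𝒱 if and only if 0 ∈ 𝒱, p ∈ 𝒱, 𝒱 contains an even number n₁ ∈ {2,4,…,2p−2}, and 𝒱 contains an odd number n₂ ∈ {1,3,…,2p−1} with n₂ ≠ p. -/
open Polynomial

namespace Stmt5Aux

noncomputable def W (N : ℕ) : ℂ := Complex.exp (2 * Real.pi * Complex.I / N)

lemma W_prim (N : ℕ) (hN : N ≠ 0) : IsPrimitiveRoot (W N) N :=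
  Complex.isPrimitiveRoot_exp N hN

lemma dft_apply (N : ℕ) (n₁ n₂ : Fin N) :
    dft N n₁ n₂ = (1 / Real.sqrt N : ℂ) * ((W N) ^ ((n₁ : ℕ) * (n₂ : ℕ)))⁻¹ := by
  have harg : (-(2 * Real.pi * Complex.I * (n₁ : ℕ) * (n₂ : ℕ)) / (N : ℂ)) =
      -((((n₁ : ℕ) * (n₂ : ℕ) : ℕ) : ℂ) * (2 * Real.pi * Complex.I / N)) := by
    push_cast; ring
  show (1 / Real.sqrt N : ℂ) * Complex.exp _ = _
  rw [harg, Complex.exp_neg, Complex.exp_nat_mul]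
  rfl

lemma geom (N : ℕ) (z : ℂ) (hz : z ^ N = 1) :
    ∑ m : Fin N, z ^ (m : ℕ) = if z = 1 then (N : ℂ) else 0 := by
  rw [Fin.sum_univ_eq_sum_range (fun i => z ^ i)]
  split_ifs with h
  · simp [h]
  · rw [geom_sum_eq h, hz]; simp

lemma core (N : ℕ) (hN : 0 < N) (j k : Fin N) :
    ∑ m : Fin N, (W N) ^ ((j : ℕ) * (m : ℕ)) * ((W N) ^ ((k : ℕ) * (m : ℕ)))⁻¹ =
      if j = k then (N : ℂ) else 0 := by
  have hW := W_prim N hN.ne'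
  set z : ℂ := W N ^ (j : ℕ) * (W N ^ (k : ℕ))⁻¹ with hzdef
  have hW0 : (W N : ℂ) ≠ 0 := hW.ne_zero hN.ne'
  have hWk : (W N : ℂ) ^ (k : ℕ) ≠ 0 := pow_ne_zero _ hW0
  have hzN : z ^ N = 1 := by
    rw [hzdef, mul_pow, inv_pow, ← pow_mul, ← pow_mul, mul_comm (j : ℕ) N,
      mul_comm (k : ℕ) N, pow_mul, pow_mul, hW.pow_eq_one, one_pow, one_pow, inv_one, mul_one]
  have hzm : ∀ m : Fin N, z ^ (m : ℕ) =
      (W N) ^ ((j : ℕ) * (m : ℕ)) * ((W N) ^ ((k : ℕ) * (m : ℕ)))⁻¹ := by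
    intro m
    rw [hzdef, mul_pow, inv_pow, ← pow_mul, ← pow_mul]
  rw [← Finset.sum_congr rfl (fun m _ => hzm m), geom N z hzN]
  have hz1 : z = 1 ↔ j = k := by
    rw [hzdef, mul_inv_eq_one₀ hWk]
    constructor
    · intro h
      exact Fin.ext (hW.pow_inj j.isLt k.isLt h)
    · rintro rfl; rfl
  by_cases h : j = k
  · rw [if_pos (hz1.mpr h), if_pos h]
  · rw [if_neg (fun hh => h (hz1.mp hh)), if_neg h]

lemma mulVec_dft (N : ℕ) (x : Fin N → ℂ) (m : Fin N) :
    (dft N).mulVec x m =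
      (1 / Real.sqrt N : ℂ) * ∑ k : Fin N, ((W N) ^ ((m : ℕ) * (k : ℕ)))⁻¹ * x k := by
  unfold Matrix.mulVec dotProduct
  simp only [dft_apply, Finset.mul_sum]
  refine Finset.sum_congr rfl (fun k _ => ?_)
  ring

lemma sqrtN_ne (N : ℕ) (hN : 0 < N) : (Real.sqrt N : ℂ) ≠ 0 := by
  rw [Complex.ofReal_ne_zero]
  positivity

lemma sqrt_mul_self' (N : ℕ) : (Real.sqrt N : ℂ) * (Real.sqrt N : ℂ) = (N : ℂ) := by
  rw [← Complex.ofReal_mul, Real.mul_self_sqrt (Nat.cast_nonneg N)]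
  simp

lemma inv_formula (N : ℕ) (hN : 0 < N) (x : Fin N → ℂ) (n : Fin N) :
    ∑ m : Fin N, (W N) ^ ((n : ℕ) * (m : ℕ)) * (dft N).mulVec x m =
      (Real.sqrt N : ℂ) * x n := by
  have h1 : ∀ m : Fin N, (W N) ^ ((n : ℕ) * (m : ℕ)) * (dft N).mulVec x m =
      (1 / Real.sqrt N : ℂ) *
        ∑ k : Fin N, (W N) ^ ((n : ℕ) * (m : ℕ)) * ((W N) ^ ((k : ℕ) * (m : ℕ)))⁻¹ * x k := by
    intro m
    rw [mulVec_dft]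
    simp only [Finset.mul_sum]
    refine Finset.sum_congr rfl (fun k _ => ?_)
    have hc : (m : ℕ) * (k : ℕ) = (k : ℕ) * (m : ℕ) := Nat.mul_comm _ _
    rw [hc]; ring
  rw [Finset.sum_congr rfl (fun m _ => h1 m), ← Finset.mul_sum, Finset.sum_comm]
  have h2 : ∀ k : Fin N, ∑ m : Fin N,
      (W N) ^ ((n : ℕ) * (m : ℕ)) * ((W N) ^ ((k : ℕ) * (m : ℕ)))⁻¹ * x k =
      (if n = k then (N : ℂ) else 0) * x k := by
    intro k
    rw [← Finset.sum_mul, core N hN n k]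
  rw [Finset.sum_congr rfl (fun k _ => h2 k)]
  have h3 : ∑ k : Fin N, (if n = k then (N : ℂ) else 0) * x k = (N : ℂ) * x n := by
    rw [Finset.sum_eq_single n]
    · simp
    · intro b _ hb
      rw [if_neg (fun h => hb (h.symm)), zero_mul]
    · intro h; exact absurd (Finset.mem_univ n) h
  rw [h3]
  have h4 := sqrt_mul_self' N
  have h5 := sqrtN_ne N hN
  field_simp
  linear_combination (-(x n)) * h4

lemma synth (N : ℕ) (hN : 0 < N) (y : Fin N → ℂ) (x : Fin N → ℂ)
    (hx : ∀ n : Fin N, x n = (1 / Real.sqrt N : ℂ) *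
      ∑ k : Fin N, y k * (W N) ^ ((n : ℕ) * (k : ℕ))) (m : Fin N) :
    (dft N).mulVec x m = y m := by
  rw [mulVec_dft]
  have h1 : ∀ nn : Fin N, ((W N) ^ ((m : ℕ) * (nn : ℕ)))⁻¹ * x nn =
      (1 / Real.sqrt N : ℂ) * ∑ k : Fin N,
        y k * ((W N) ^ ((k : ℕ) * (nn : ℕ)) * ((W N) ^ ((m : ℕ) * (nn : ℕ)))⁻¹) := by
    intro nn
    rw [hx nn]
    simp only [Finset.mul_sum]
    refine Finset.sum_congr rfl (fun k _ => ?_)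
    have hc : (nn : ℕ) * (k : ℕ) = (k : ℕ) * (nn : ℕ) := Nat.mul_comm _ _
    rw [hc]; ring
  rw [Finset.sum_congr rfl (fun nn _ => h1 nn), ← Finset.mul_sum, Finset.sum_comm]
  have h2 : ∀ k : Fin N, ∑ nn : Fin N,
      y k * ((W N) ^ ((k : ℕ) * (nn : ℕ)) * ((W N) ^ ((m : ℕ) * (nn : ℕ)))⁻¹) =
      y k * (if k = m then (N : ℂ) else 0) := by
    intro k
    rw [← Finset.mul_sum, core N hN k m]
  rw [Finset.sum_congr rfl (fun k _ => h2 k)]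
  have h3 : ∑ k : Fin N, y k * (if k = m then (N : ℂ) else 0) = y m * (N : ℂ) := by
    rw [Finset.sum_eq_single m]
    · simp
    · intro b _ hb
      rw [if_neg hb, mul_zero]
    · intro h; exact absurd (Finset.mem_univ m) h
  rw [h3]
  have h4 := sqrt_mul_self' N
  have h5 := sqrtN_ne N hN
  rw [← h4]
  field_simp

lemma ident_iff (N : ℕ) (V : Set ℕ) :
    ModuloDFTIdentifiable N V ↔
      ∀ x : Fin N → ℂ, (∀ n : Fin N, (n : ℕ) ∈ V → x n = 0) →
        (∀ m : Fin N, IsGaussianInt ((dft N).mulVec x m)) → x = 0 := by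
  constructor
  · intro h x hx hG
    exact h x 0 hx (fun _ _ => rfl) (fun m => by
      rw [Matrix.mulVec_zero]
      simpa using hG m)
  · intro h s s' hs hs' hG
    have hdiff : ∀ n : Fin N, (n : ℕ) ∈ V → (s - s') n = 0 := fun n hn => by
      simp [Pi.sub_apply, hs n hn, hs' n hn]
    have hG' : ∀ m : Fin N, IsGaussianInt ((dft N).mulVec (s - s') m) := fun m => by
      rw [Matrix.mulVec_sub]
      exact hG m
    exact sub_eq_zero.mp (h (s - s') hdiff hG')

/-- type of an index: the order of `W^n` among `2p`-th roots of unity -/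
def typ (p n : ℕ) : ℕ := if n = 0 then 1 else if n = p then 2 else if 2 ∣ n then p else 2 * p

lemma typ_mem (p n : ℕ) : typ p n = 1 ∨ typ p n = 2 ∨ typ p n = p ∨ typ p n = 2 * p := by
  unfold typ
  split_ifs <;> tauto

lemma typ_prim (p : ℕ) (hp : p.Prime) (hp3 : 3 ≤ p) (n : ℕ) (hn : n < 2 * p) :
    IsPrimitiveRoot ((W (2 * p)) ^ n) (typ p n) := by
  have hN : (2 * p) ≠ 0 := by omega
  have hW := W_prim (2 * p) hN
  have hpodd : ¬ (2 ∣ p) := by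
    intro h
    have := (Nat.prime_dvd_prime_iff_eq Nat.prime_two hp).mp h
    omega
  unfold typ
  split_ifs with h0 hpn h2
  · subst h0
    simpa using IsPrimitiveRoot.one (M₀ := ℂ)
  · subst hpn
    exact hW.pow (by omega) (by ring)
  · obtain ⟨k, rfl⟩ := h2
    have hk0 : k ≠ 0 := by omega
    have hkp : k < p := by omega
    have hWp : IsPrimitiveRoot ((W (2 * p)) ^ 2) p := hW.pow (by omega) rfl
    have hcop : Nat.Coprime k p := by
      rw [Nat.coprime_comm]
      exact (Nat.Prime.coprime_iff_not_dvd hp).mpr (fun hd => by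
        have := Nat.le_of_dvd (by omega) hd
        omega)
    have := hWp.pow_of_coprime k hcop
    rwa [← pow_mul] at this
  · have hcop : Nat.Coprime n (2 * p) := by
      have hc2 : Nat.Coprime n 2 := by
        rw [Nat.coprime_comm]
        exact (Nat.Prime.coprime_iff_not_dvd Nat.prime_two).mpr h2
      have hcp : Nat.Coprime n p := by
        rw [Nat.coprime_comm]
        refine (Nat.Prime.coprime_iff_not_dvd hp).mpr (fun hd => ?_)
        obtain ⟨c, rfl⟩ := hd
        rcases (show c = 0 ∨ c = 1 ∨ 2 ≤ c by omega) with rfl | rfl | hc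
        · omega
        · omega
        · have : 2 * p ≤ p * c := by
            calc 2 * p = p * 2 := by ring
            _ ≤ p * c := Nat.mul_le_mul_left p hc
          omega
      exact Nat.Coprime.mul_right hc2 hcp
    exact hW.pow_of_coprime n hcop

lemma totient_two_mul (p : ℕ) (hp : p.Prime) (hp3 : 3 ≤ p) :
    Nat.totient (2 * p) = p - 1 := by
  have hpodd : ¬ (2 ∣ p) := by
    intro h
    have := (Nat.prime_dvd_prime_iff_eq Nat.prime_two hp).mp h
    omega
  have hcop : Nat.Coprime 2 p := (Nat.Prime.coprime_iff_not_dvd Nat.prime_two).mpr hpodd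
  rw [Nat.totient_mul hcop, Nat.totient_two, Nat.totient_prime hp, one_mul]

lemma totient_four_mul (p : ℕ) (hp : p.Prime) (hp3 : 3 ≤ p) :
    Nat.totient (4 * p) = 2 * (p - 1) := by
  have hpodd : ¬ (2 ∣ p) := by
    intro h
    have := (Nat.prime_dvd_prime_iff_eq Nat.prime_two hp).mp h
    omega
  have hcop2 : Nat.Coprime 2 p := (Nat.Prime.coprime_iff_not_dvd Nat.prime_two).mpr hpodd
  have hcop : Nat.Coprime 4 p := by
    have : (4 : ℕ) = 2 ^ 2 := by norm_num
    rw [this]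
    exact Nat.Coprime.pow_left 2 hcop2
  have h4 : Nat.totient 4 = 2 := by decide
  rw [Nat.totient_mul hcop, h4, Nat.totient_prime hp]

lemma I_prim : IsPrimitiveRoot (Complex.I) 4 := by
  have h := Complex.isPrimitiveRoot_exp 4 (by norm_num)
  have he : Complex.exp (2 * Real.pi * Complex.I / ((4 : ℕ) : ℂ)) = Complex.I := by
    have harg : (2 * Real.pi * Complex.I / ((4 : ℕ) : ℂ)) = (Real.pi / 2 : ℝ) * Complex.I := by
      push_cast; ring
    rw [harg, Complex.exp_mul_I, ← Complex.ofReal_cos, ← Complex.ofReal_sin,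
      Real.cos_pi_div_two, Real.sin_pi_div_two]
    simp
  rwa [he] at h

lemma I_notMem (p : ℕ) (hp : p.Prime) (hp3 : 3 ≤ p) (d : ℕ) (hd : d = p ∨ d = 2 * p)
    (ζ : ℂ) (hζ : IsPrimitiveRoot ζ d) :
    Complex.I ∉ IntermediateField.adjoin ℚ {ζ} := by
  intro hI
  have hpodd : ¬ (2 ∣ p) := by
    intro h
    have := (Nat.prime_dvd_prime_iff_eq Nat.prime_two hp).mp h
    omega
  have hd0 : 0 < d := by rcases hd with h | h <;> omega
  have hcop2 : Nat.Coprime 2 p := (Nat.Prime.coprime_iff_not_dvd Nat.prime_two).mpr hpodd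
  have hcop4 : Nat.Coprime 4 p := by
    have h42 : (4 : ℕ) = 2 ^ 2 := by norm_num
    rw [h42]
    exact Nat.Coprime.pow_left 2 hcop2
  -- η = I * ζ is a primitive 4p-th root of unity
  have hη : IsPrimitiveRoot (Complex.I * ζ) (4 * p) := by
    constructor
    · have e1 : Complex.I ^ (4 * p) = 1 := by
        rw [pow_mul, Complex.I_pow_four, one_pow]
      have e2 : ζ ^ (4 * p) = 1 := by
        rcases hd with h | h <;> subst d
        · rw [show 4 * p = p * 4 by ring, pow_mul, hζ.pow_eq_one, one_pow]
        · rw [show 4 * p = 2 * p * 2 by ring, pow_mul, hζ.pow_eq_one, one_pow]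
      rw [mul_pow, e1, e2, one_mul]
    · intro l hl
      rw [mul_pow] at hl
      have hζl : ζ ^ l = (Complex.I ^ l)⁻¹ := eq_inv_of_mul_eq_one_right hl
      have h4l : ζ ^ (4 * l) = 1 := by
        calc ζ ^ (4 * l) = ((Complex.I ^ l) ^ 4)⁻¹ := by
              rw [show 4 * l = l * 4 by ring, pow_mul, hζl, inv_pow]
          _ = ((Complex.I ^ 4) ^ l)⁻¹ := by rw [← pow_mul, mul_comm l 4, pow_mul]
          _ = 1 := by rw [Complex.I_pow_four, one_pow, inv_one]
      have hd4l : d ∣ 4 * l := hζ.dvd_of_pow_eq_one _ h4l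
      have hIld : Complex.I ^ (l * d) = 1 := by
        have h1 : Complex.I ^ l = (ζ ^ l)⁻¹ := by rw [hζl, inv_inv]
        calc Complex.I ^ (l * d) = (Complex.I ^ l) ^ d := by rw [pow_mul]
          _ = ((ζ ^ l) ^ d)⁻¹ := by rw [h1, inv_pow]
          _ = ((ζ ^ d) ^ l)⁻¹ := by rw [← pow_mul, mul_comm l d, pow_mul]
          _ = 1 := by rw [hζ.pow_eq_one, one_pow, inv_one]
      have h4ld : 4 ∣ l * d := I_prim.dvd_of_pow_eq_one _ hIld
      rcases hd with h | h <;> subst d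
      · -- d = p
        have h4lp : (4 : ℕ) ∣ l := hcop4.dvd_of_dvd_mul_right h4ld
        have hIl : Complex.I ^ l = 1 := by
          obtain ⟨c, rfl⟩ := h4lp
          rw [pow_mul, Complex.I_pow_four, one_pow]
        have hζl1 : ζ ^ l = 1 := by rw [hζl, hIl, inv_one]
        have hpl : p ∣ l := hζ.dvd_of_pow_eq_one _ hζl1
        exact Nat.Coprime.mul_dvd_of_dvd_of_dvd hcop4 h4lp hpl
      · -- d = 2p
        have h2l : 2 ∣ l := by
          obtain ⟨c, hc⟩ := h4ld
          have he1 : l * (2 * p) = 2 * (l * p) := by ring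
          have he2 : 2 ∣ l * p := by omega
          rcases (Nat.Prime.dvd_mul Nat.prime_two).mp he2 with h' | h'
          · exact h'
          · exact absurd h' hpodd
        obtain ⟨m, rfl⟩ := h2l
        have hIm : Complex.I ^ (2 * m) = (-1 : ℂ) ^ m := by
          rw [pow_mul, Complex.I_sq]
        by_cases hm : 2 ∣ m
        · obtain ⟨c, rfl⟩ := hm
          have hIl : Complex.I ^ (2 * (2 * c)) = 1 := by
            rw [show 2 * (2 * c) = 4 * c by ring, pow_mul, Complex.I_pow_four, one_pow]
          have hζl1 : ζ ^ (2 * (2 * c)) = 1 := by rw [hζl, hIl, inv_one]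
          have h2pl : 2 * p ∣ 2 * (2 * c) := hζ.dvd_of_pow_eq_one _ hζl1
          have hp2c : p ∣ 2 * c := by
            obtain ⟨e, he⟩ := h2pl
            refine ⟨e, ?_⟩
            have he' : 2 * p * e = 2 * (p * e) := by ring
            omega
          have hpc : p ∣ c := by
            rcases (Nat.Prime.dvd_mul hp).mp hp2c with h' | h'
            · exact absurd ((Nat.prime_dvd_prime_iff_eq hp Nat.prime_two).mp h') (by omega)
            · exact h'
          obtain ⟨e, rfl⟩ := hpc
          exact ⟨e, by ring⟩
        · exfalso
          have hIl : Complex.I ^ (2 * m) = -1 := by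
            rw [hIm, Odd.neg_one_pow (Nat.odd_iff.mpr (by omega))]
          have hζlm : ζ ^ (2 * m) = -1 := by
            rw [hζl, hIl]
            norm_num
          have hcontr : (ζ ^ (2 * m)) ^ p = 1 := by
            rw [← pow_mul, show 2 * m * p = 2 * p * m by ring, pow_mul, hζ.pow_eq_one, one_pow]
          rw [hζlm, Odd.neg_one_pow (Nat.odd_iff.mpr (by omega))] at hcontr
          norm_num at hcontr
  -- degree contradiction
  have hζint : IsIntegral ℚ ζ := by
    refine ⟨X ^ d - 1, monic_X_pow_sub_C 1 hd0.ne', ?_⟩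
    simp [hζ.pow_eq_one]
  set K := IntermediateField.adjoin ℚ ({ζ} : Set ℂ) with hK
  haveI : FiniteDimensional ℚ K := IntermediateField.adjoin.finiteDimensional hζint
  have hζK : ζ ∈ K := IntermediateField.mem_adjoin_simple_self ℚ ζ
  have hηK : Complex.I * ζ ∈ K := K.mul_mem hI hζK
  have hrank : Module.finrank ℚ K = p - 1 := by
    rw [hK, IntermediateField.adjoin.finrank hζint,
      ← cyclotomic_eq_minpoly_rat hζ hd0, natDegree_cyclotomic]
    rcases hd with h | h <;> subst d
    · exact Nat.totient_prime hp
    · exact totient_two_mul p hp hp3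
  set η : K := ⟨Complex.I * ζ, hηK⟩ with hηdef
  have hηint : IsIntegral ℚ η := IsIntegral.of_finite ℚ η
  have hmin : (minpoly ℚ η).natDegree = 2 * (p - 1) := by
    have h1 : minpoly ℚ ((algebraMap K ℂ) η) = minpoly ℚ η :=
      minpoly.algebraMap_eq (algebraMap K ℂ).injective η
    have h2 : (algebraMap K ℂ) η = Complex.I * ζ := rfl
    have h3 : minpoly ℚ (Complex.I * ζ) = cyclotomic (4 * p) ℚ :=
      (cyclotomic_eq_minpoly_rat hη (by omega)).symm
    rw [← h1, h2, h3, natDegree_cyclotomic, totient_four_mul p hp hp3]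
  have hdvd : (minpoly ℚ η).natDegree ∣ Module.finrank ℚ K := minpoly.degree_dvd hηint
  rw [hmin, hrank] at hdvd
  have hle := Nat.le_of_dvd (by omega) hdvd
  omega

lemma typ_spec (p n : ℕ) (hp3 : 3 ≤ p) :
    (typ p n = 1 → n = 0) ∧ (typ p n = 2 → n = p) ∧
      (typ p n = p → n ≠ 0 ∧ n ≠ p ∧ 2 ∣ n) ∧
      (typ p n = 2 * p → n ≠ 0 ∧ n ≠ p ∧ ¬ 2 ∣ n) := by
  unfold typ
  split_ifs <;> refine ⟨fun h => ?_, fun h => ?_, fun h => ?_, fun h => ?_⟩ <;> omega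

lemma AB_zero (p : ℕ) (hp : p.Prime) (hp3 : 3 ≤ p) (d : ℕ)
    (hd : d = 1 ∨ d = 2 ∨ d = p ∨ d = 2 * p) (ζ : ℂ) (hζ : IsPrimitiveRoot ζ d)
    (A B : ℚ[X]) (h : aeval ζ A + Complex.I * aeval ζ B = 0) :
    aeval ζ A = 0 ∧ aeval ζ B = 0 := by
  have real_case : ∀ c : ℚ, ζ = algebraMap ℚ ℂ c → aeval ζ A = 0 ∧ aeval ζ B = 0 := by
    intro c hc
    subst hc
    rw [aeval_algebraMap_apply, aeval_algebraMap_apply] at h ⊢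
    have him := congrArg Complex.im h
    have hre := congrArg Complex.re h
    simp only [Complex.add_im, Complex.add_re, Complex.mul_im, Complex.mul_re,
      Complex.I_re, Complex.I_im, Complex.zero_im, Complex.zero_re] at him hre
    have hB0 : (algebraMap ℚ ℂ) (aeval c B) = 0 := by
      have : ((aeval c B : ℚ) : ℂ) = 0 := by
        rw [Complex.ext_iff]
        constructor
        · simp only [Complex.ratCast_re]
          have := him
          simp [Complex.ratCast_im, Complex.ratCast_re] at this
          exact_mod_cast this
        · simp [Complex.ratCast_im]
      rwa [eq_ratCast (algebraMap ℚ ℂ)]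
    refine ⟨?_, hB0⟩
    rw [hB0, mul_zero, add_zero] at h
    exact h
  rcases hd with rfl | rfl | h' | h'
  · have hζ1 : ζ = 1 := by
      have := hζ.pow_eq_one
      simpa using this
    exact real_case 1 (by rw [hζ1, map_one])
  · have hζ2 : ζ = -1 := by
      have h2 : ζ ^ 2 = 1 := hζ.pow_eq_one
      have hne : ζ ≠ 1 := hζ.ne_one (by norm_num)
      have : (ζ - 1) * (ζ + 1) = 0 := by ring_nf; linear_combination h2
      rcases mul_eq_zero.mp this with h' | h'
      · exact absurd (by linear_combination h' : ζ = 1) hne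
      · linear_combination h'
    exact real_case (-1) (by rw [hζ2, map_neg, map_one])
  all_goals {
    have hdp : d = p ∨ d = 2 * p := by tauto
    have key : aeval ζ B = 0 := by
      by_contra hB
      have hmem : ∀ P : ℚ[X], aeval ζ P ∈ IntermediateField.adjoin ℚ ({ζ} : Set ℂ) := by
        intro P
        have h1 : aeval ζ P ∈ Algebra.adjoin ℚ ({ζ} : Set ℂ) := by
          rw [Algebra.adjoin_singleton_eq_range_aeval]
          exact ⟨P, rfl⟩
        exact IntermediateField.algebra_adjoin_le_adjoin ℚ {ζ} h1
      have hIeq : Complex.I = -aeval ζ A / aeval ζ B := by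
        field_simp
        linear_combination h
      have hImem : Complex.I ∈ IntermediateField.adjoin ℚ ({ζ} : Set ℂ) := by
        rw [hIeq]
        exact div_mem (neg_mem (hmem A)) (hmem B)
      exact I_notMem p hp hp3 d hdp ζ hζ hImem
    refine ⟨?_, key⟩
    rw [key, mul_zero, add_zero] at h
    exact h }

lemma poly_vanish (p : ℕ) (hp : p.Prime) (hp3 : 3 ≤ p) (A : ℚ[X]) (hdeg : A.natDegree < 2 * p)
    (ζ₁ ζ₂ ζ₃ ζ₄ : ℂ) (h1 : IsPrimitiveRoot ζ₁ 1) (h2 : IsPrimitiveRoot ζ₂ 2)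
    (h3 : IsPrimitiveRoot ζ₃ p) (h4 : IsPrimitiveRoot ζ₄ (2 * p))
    (e1 : aeval ζ₁ A = 0) (e2 : aeval ζ₂ A = 0) (e3 : aeval ζ₃ A = 0) (e4 : aeval ζ₄ A = 0) :
    A = 0 := by
  by_contra hA
  have d1 : cyclotomic 1 ℚ ∣ A := by
    rw [cyclotomic_eq_minpoly_rat h1 one_pos]; exact minpoly.dvd ℚ ζ₁ e1
  have d2 : cyclotomic 2 ℚ ∣ A := by
    rw [cyclotomic_eq_minpoly_rat h2 (by norm_num)]; exact minpoly.dvd ℚ ζ₂ e2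
  have d3 : cyclotomic p ℚ ∣ A := by
    rw [cyclotomic_eq_minpoly_rat h3 (by omega)]; exact minpoly.dvd ℚ ζ₃ e3
  have d4 : cyclotomic (2 * p) ℚ ∣ A := by
    rw [cyclotomic_eq_minpoly_rat h4 (by omega)]; exact minpoly.dvd ℚ ζ₄ e4
  have c12 : IsCoprime (cyclotomic 1 ℚ) (cyclotomic 2 ℚ) := cyclotomic.isCoprime_rat (by norm_num)
  have h12 : cyclotomic 1 ℚ * cyclotomic 2 ℚ ∣ A := c12.mul_dvd d1 d2
  have c3 : IsCoprime (cyclotomic 1 ℚ * cyclotomic 2 ℚ) (cyclotomic p ℚ) :=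
    IsCoprime.mul_left (cyclotomic.isCoprime_rat (by omega)) (cyclotomic.isCoprime_rat (by omega))
  have h123 : cyclotomic 1 ℚ * cyclotomic 2 ℚ * cyclotomic p ℚ ∣ A := c3.mul_dvd h12 d3
  have c4 : IsCoprime (cyclotomic 1 ℚ * cyclotomic 2 ℚ * cyclotomic p ℚ)
      (cyclotomic (2 * p) ℚ) :=
    IsCoprime.mul_left (IsCoprime.mul_left (cyclotomic.isCoprime_rat (by omega))
      (cyclotomic.isCoprime_rat (by omega))) (cyclotomic.isCoprime_rat (by omega))
  have h1234 : cyclotomic 1 ℚ * cyclotomic 2 ℚ * cyclotomic p ℚ * cyclotomic (2 * p) ℚ ∣ A :=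
    c4.mul_dvd h123 d4
  have hne12 : cyclotomic 1 ℚ * cyclotomic 2 ℚ ≠ 0 :=
    mul_ne_zero (cyclotomic_ne_zero 1 ℚ) (cyclotomic_ne_zero 2 ℚ)
  have hne123 : cyclotomic 1 ℚ * cyclotomic 2 ℚ * cyclotomic p ℚ ≠ 0 :=
    mul_ne_zero hne12 (cyclotomic_ne_zero p ℚ)
  have hdeg' : (cyclotomic 1 ℚ * cyclotomic 2 ℚ * cyclotomic p ℚ *
      cyclotomic (2 * p) ℚ).natDegree = 2 * p := by
    rw [natDegree_mul hne123 (cyclotomic_ne_zero (2 * p) ℚ),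
      natDegree_mul hne12 (cyclotomic_ne_zero p ℚ),
      natDegree_mul (cyclotomic_ne_zero 1 ℚ) (cyclotomic_ne_zero 2 ℚ),
      natDegree_cyclotomic, natDegree_cyclotomic, natDegree_cyclotomic, natDegree_cyclotomic,
      Nat.totient_one, Nat.totient_two, Nat.totient_prime hp, totient_two_mul p hp hp3]
    omega
  have hfin := Polynomial.natDegree_le_of_dvd h1234 hA
  rw [hdeg'] at hfin
  omega

lemma coeff_extract (N : ℕ) (c : Fin N → ℚ) (k : Fin N) :
    (∑ m : Fin N, C (c m) * X ^ (m : ℕ)).coeff (k : ℕ) = c k := by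
  rw [finset_sum_coeff]
  rw [Finset.sum_eq_single k]
  · rw [coeff_C_mul_X_pow, if_pos rfl]
  · intro b _ hb
    rw [coeff_C_mul_X_pow, if_neg (fun hh => hb (Fin.ext hh.symm))]
  · intro h; exact absurd (Finset.mem_univ k) h

lemma aeval_extract (N : ℕ) (c : Fin N → ℚ) (z : ℂ) :
    aeval z (∑ m : Fin N, C (c m) * X ^ (m : ℕ)) = ∑ m : Fin N, ((c m : ℂ)) * z ^ (m : ℕ) := by
  rw [map_sum]
  refine Finset.sum_congr rfl (fun m _ => ?_)
  rw [map_mul, map_pow, aeval_X, aeval_C, eq_ratCast]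

lemma natDegree_extract (N : ℕ) (hN : 0 < N) (c : Fin N → ℚ) :
    (∑ m : Fin N, C (c m) * X ^ (m : ℕ)).natDegree < N := by
  have h : (∑ m : Fin N, C (c m) * X ^ (m : ℕ)).natDegree ≤ N - 1 :=
    Polynomial.natDegree_sum_le_of_forall_le (s := Finset.univ)
      (fun m : Fin N => C (c m) * X ^ (m : ℕ))
      (fun i _ => (Polynomial.natDegree_C_mul_X_pow_le (c i) (i : ℕ)).trans
        (by omega : (i : ℕ) ≤ N - 1))
  omega

lemma ident (p : ℕ) (hp : p.Prime) (hp3 : 3 ≤ p) (V : Set ℕ) (hV : ∀ n ∈ V, n < 2 * p)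
    (h0V : 0 ∈ V) (hpV : p ∈ V)
    (hn1 : ∃ n₁ ∈ V, 2 ∣ n₁ ∧ 2 ≤ n₁ ∧ n₁ ≤ 2 * p - 2)
    (hn2 : ∃ n₂ ∈ V, ¬ 2 ∣ n₂ ∧ 1 ≤ n₂ ∧ n₂ ≤ 2 * p - 1 ∧ n₂ ≠ p) :
    ModuloDFTIdentifiable (2 * p) V := by
  have hpodd : ¬ (2 ∣ p) := by
    intro h
    have := (Nat.prime_dvd_prime_iff_eq Nat.prime_two hp).mp h
    omega
  set N := 2 * p with hNeq
  rw [ident_iff]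
  intro x hx hG
  have hN0 : 0 < N := by omega
  choose a b hab using hG
  set A : ℚ[X] := ∑ m : Fin N, C ((a m : ℚ)) * X ^ (m : ℕ) with hA
  set B : ℚ[X] := ∑ m : Fin N, C ((b m : ℚ)) * X ^ (m : ℕ) with hB
  have hkey : ∀ n : Fin N, (n : ℕ) ∈ V →
      aeval ((W N) ^ (n : ℕ)) A + Complex.I * aeval ((W N) ^ (n : ℕ)) B = 0 := by
    intro n hn
    have hinv := inv_formula N hN0 x n
    rw [hx n hn, mul_zero] at hinv
    rw [hA, hB, aeval_extract, aeval_extract, ← hinv, Finset.mul_sum,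
      ← Finset.sum_add_distrib]
    refine Finset.sum_congr rfl (fun m _ => ?_)
    rw [hab m, pow_mul]
    push_cast
    ring
  -- four special indices
  obtain ⟨n₁, hn₁V, hn₁e, hn₁2, hn₁le⟩ := hn1
  obtain ⟨n₂, hn₂V, hn₂o, hn₂1, hn₂le, hn₂p⟩ := hn2
  have hn₁lt : n₁ < N := hV n₁ hn₁V
  have hn₂lt : n₂ < N := hV n₂ hn₂V
  have hplt : p < N := by omega
  -- primitive roots
  have ht0 : typ p 0 = 1 := by unfold typ; rw [if_pos rfl]
  have htp : typ p p = 2 := by unfold typ; rw [if_neg (by omega), if_pos rfl]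
  have ht1 : typ p n₁ = p := by
    unfold typ
    rw [if_neg (by omega), if_neg (by intro h; exact hpodd (h ▸ hn₁e)), if_pos hn₁e]
  have ht2 : typ p n₂ = 2 * p := by
    unfold typ
    rw [if_neg (by omega), if_neg hn₂p, if_neg hn₂o]
  have hz1 : IsPrimitiveRoot ((W N) ^ (0 : ℕ)) 1 := ht0 ▸ typ_prim p hp hp3 0 (by omega)
  have hz2 : IsPrimitiveRoot ((W N) ^ (p : ℕ)) 2 := htp ▸ typ_prim p hp hp3 p (by omega)
  have hz3 : IsPrimitiveRoot ((W N) ^ (n₁ : ℕ)) p := ht1 ▸ typ_prim p hp hp3 n₁ hn₁lt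
  have hz4 : IsPrimitiveRoot ((W N) ^ (n₂ : ℕ)) (2 * p) := ht2 ▸ typ_prim p hp hp3 n₂ hn₂lt
  -- evaluate at the four indices
  have hv0 := hkey ⟨0, hN0⟩ h0V
  have hvp := hkey ⟨p, hplt⟩ hpV
  have hv1 := hkey ⟨n₁, hn₁lt⟩ hn₁V
  have hv2 := hkey ⟨n₂, hn₂lt⟩ hn₂V
  have hAB0 := AB_zero p hp hp3 1 (by tauto) _ hz1 A B hv0
  have hABp := AB_zero p hp hp3 2 (by tauto) _ hz2 A B hvp
  have hAB1 := AB_zero p hp hp3 p (by tauto) _ hz3 A B hv1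
  have hAB2 := AB_zero p hp hp3 (2 * p) (by tauto) _ hz4 A B hv2
  have hAdeg : A.natDegree < 2 * p := hA ▸ natDegree_extract N hN0 _
  have hBdeg : B.natDegree < 2 * p := hB ▸ natDegree_extract N hN0 _
  have hA0 : A = 0 := poly_vanish p hp hp3 A hAdeg _ _ _ _ hz1 hz2 hz3 hz4
    hAB0.1 hABp.1 hAB1.1 hAB2.1
  have hB0 : B = 0 := poly_vanish p hp hp3 B hBdeg _ _ _ _ hz1 hz2 hz3 hz4
    hAB0.2 hABp.2 hAB1.2 hAB2.2
  have hzero : ∀ m : Fin N, (dft N).mulVec x m = 0 := by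
    intro m
    have ha0 : (a m : ℚ) = 0 := by
      have := coeff_extract N (fun m => (a m : ℚ)) m
      rw [← hA, hA0, coeff_zero] at this
      exact this.symm
    have hb0 : (b m : ℚ) = 0 := by
      have := coeff_extract N (fun m => (b m : ℚ)) m
      rw [← hB, hB0, coeff_zero] at this
      exact this.symm
    have ha0' : (a m : ℂ) = 0 := by exact_mod_cast congrArg (fun q : ℚ => (q : ℂ)) ha0
    have hb0' : (b m : ℂ) = 0 := by exact_mod_cast congrArg (fun q : ℚ => (q : ℂ)) hb0
    rw [hab m, ha0', hb0', zero_mul, add_zero]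
  funext n
  have hinv := inv_formula N hN0 x n
  rw [Finset.sum_congr rfl (fun m _ => by rw [hzero m, mul_zero]),
    Finset.sum_const_zero] at hinv
  have hxn : x n = 0 := by
    rcases mul_eq_zero.mp hinv.symm with h | h
    · exact absurd h (sqrtN_ne N hN0)
    · exact h
  simpa using hxn

lemma not_ident (p : ℕ) (hp : p.Prime) (hp3 : 3 ≤ p) (V : Set ℕ)
    (d₁ d₂ d₃ : ℕ) (hd₁ : 0 < d₁) (hd₂ : 0 < d₂) (hd₃ : 0 < d₃)
    (hdeg : d₁.totient + d₂.totient + d₃.totient < 2 * p)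
    (hmiss : ∀ n, n ∈ V → n < 2 * p → typ p n = d₁ ∨ typ p n = d₂ ∨ typ p n = d₃) :
    ¬ ModuloDFTIdentifiable (2 * p) V := by
  set N := 2 * p with hNeq
  have hN0 : 0 < N := by omega
  intro hid
  rw [ident_iff] at hid
  set gZ : ℤ[X] := cyclotomic d₁ ℤ * cyclotomic d₂ ℤ * cyclotomic d₃ ℤ with hgZ
  set g : ℂ[X] := cyclotomic d₁ ℂ * cyclotomic d₂ ℂ * cyclotomic d₃ ℂ with hg
  have hmap : gZ.map (Int.castRingHom ℂ) = g := by
    rw [hgZ, hg, Polynomial.map_mul, Polynomial.map_mul, map_cyclotomic, map_cyclotomic,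
      map_cyclotomic]
  have hne12 : cyclotomic d₁ ℂ * cyclotomic d₂ ℂ ≠ 0 :=
    mul_ne_zero (cyclotomic_ne_zero d₁ ℂ) (cyclotomic_ne_zero d₂ ℂ)
  have hgne : g ≠ 0 := mul_ne_zero hne12 (cyclotomic_ne_zero d₃ ℂ)
  have hdegg : g.natDegree < N := by
    rw [hg, natDegree_mul hne12 (cyclotomic_ne_zero d₃ ℂ),
      natDegree_mul (cyclotomic_ne_zero d₁ ℂ) (cyclotomic_ne_zero d₂ ℂ),
      natDegree_cyclotomic, natDegree_cyclotomic, natDegree_cyclotomic]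
    omega
  set y : Fin N → ℂ := fun m => g.coeff (m : ℕ) with hy
  set x : Fin N → ℂ := fun n =>
    (1 / Real.sqrt N : ℂ) * ∑ k : Fin N, y k * (W N) ^ ((n : ℕ) * (k : ℕ)) with hxdef
  have hFx : ∀ m : Fin N, (dft N).mulVec x m = y m := synth N hN0 y x (fun n => rfl)
  have hxV : ∀ n : Fin N, (n : ℕ) ∈ V → x n = 0 := by
    intro n hn
    have heval : x n = (1 / Real.sqrt N : ℂ) * g.eval ((W N) ^ (n : ℕ)) := by
      rw [hxdef]
      show (1 / Real.sqrt N : ℂ) * _ = _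
      congr 1
      rw [Polynomial.eval_eq_sum_range' hdegg,
        ← Fin.sum_univ_eq_sum_range (fun k => g.coeff k * ((W N) ^ (n : ℕ)) ^ k)]
      refine Finset.sum_congr rfl (fun k _ => ?_)
      rw [hy, ← pow_mul]
    have hprim := typ_prim p hp hp3 (n : ℕ) n.isLt
    have heval0 : g.eval ((W N) ^ (n : ℕ)) = 0 := by
      rcases hmiss (n : ℕ) hn n.isLt with h | h | h
      · have hroot : (cyclotomic d₁ ℂ).eval ((W N) ^ (n : ℕ)) = 0 :=
          (h ▸ hprim).isRoot_cyclotomic hd₁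
        rw [hg, eval_mul, eval_mul, hroot, zero_mul, zero_mul]
      · have hroot : (cyclotomic d₂ ℂ).eval ((W N) ^ (n : ℕ)) = 0 :=
          (h ▸ hprim).isRoot_cyclotomic hd₂
        rw [hg, eval_mul, eval_mul, hroot, mul_zero, zero_mul]
      · have hroot : (cyclotomic d₃ ℂ).eval ((W N) ^ (n : ℕ)) = 0 :=
          (h ▸ hprim).isRoot_cyclotomic hd₃
        rw [hg, eval_mul, hroot, mul_zero]
    rw [heval, heval0, mul_zero]
  have hGa : ∀ m : Fin N, IsGaussianInt ((dft N).mulVec x m) := by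
    intro m
    rw [hFx m]
    refine ⟨gZ.coeff (m : ℕ), 0, ?_⟩
    have : g.coeff (m : ℕ) = ((gZ.coeff (m : ℕ) : ℤ) : ℂ) := by
      rw [← hmap, Polynomial.coeff_map]
      rfl
    rw [hy]
    show g.coeff (m : ℕ) = _
    rw [this]
    push_cast
    ring
  have hx0 : x = 0 := hid x hxV hGa
  have hlead : y ⟨g.natDegree, hdegg⟩ ≠ 0 := by
    show g.coeff g.natDegree ≠ 0
    rw [← Polynomial.leadingCoeff]
    exact Polynomial.leadingCoeff_ne_zero.mpr hgne
  apply hlead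
  rw [← hFx ⟨g.natDegree, hdegg⟩, hx0, Matrix.mulVec_zero]
  rfl

end Stmt5Aux

/-- for N = 2p with p ≥ 3 prime, the modulo-DFT sensing model is identifiable
on ℂ^N_𝒱 iff 0 ∈ 𝒱, p ∈ 𝒱, 𝒱 contains a nonzero even number n₁ ∈ {2,4,…,2p−2}, and 𝒱
contains an odd number n₂ ∈ {1,3,…,2p−1} with n₂ ≠ p. -/
theorem stmt5 (p : ℕ) (hp : p.Prime) (hp3 : 3 ≤ p) (V : Set ℕ)
    (hV : ∀ n ∈ V, n < 2 * p) :
    ModuloDFTIdentifiable (2 * p) V ↔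
      (0 ∈ V ∧ p ∈ V ∧
        (∃ n₁ ∈ V, 2 ∣ n₁ ∧ 2 ≤ n₁ ∧ n₁ ≤ 2 * p - 2) ∧
        (∃ n₂ ∈ V, ¬ 2 ∣ n₂ ∧ 1 ≤ n₂ ∧ n₂ ≤ 2 * p - 1 ∧ n₂ ≠ p)) := by
  have hφ2 : Nat.totient 2 = 1 := Nat.totient_two
  have hφp : Nat.totient p = p - 1 := Nat.totient_prime hp
  have hφ2p : Nat.totient (2 * p) = p - 1 := Stmt5Aux.totient_two_mul p hp hp3
  have hφ1 : Nat.totient 1 = 1 := Nat.totient_one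
  constructor
  · intro hid
    refine ⟨?_, ?_, ?_, ?_⟩
    · by_contra h0
      refine absurd hid (Stmt5Aux.not_ident p hp hp3 V 2 p (2 * p) (by omega) (by omega)
        (by omega) (by rw [hφ2, hφp, hφ2p]; omega) ?_)
      intro n hn hlt
      rcases Stmt5Aux.typ_mem p n with h | h | h | h
      · exact absurd (((Stmt5Aux.typ_spec p n hp3).1 h) ▸ hn) h0
      · tauto
      · tauto
      · tauto
    · by_contra hpv
      refine absurd hid (Stmt5Aux.not_ident p hp hp3 V 1 p (2 * p) (by omega) (by omega)
        (by omega) (by rw [hφ1, hφp, hφ2p]; omega) ?_)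
      intro n hn hlt
      rcases Stmt5Aux.typ_mem p n with h | h | h | h
      · tauto
      · exact absurd (((Stmt5Aux.typ_spec p n hp3).2.1 h) ▸ hn) hpv
      · tauto
      · tauto
    · by_contra hev
      push_neg at hev
      refine absurd hid (Stmt5Aux.not_ident p hp hp3 V 1 2 (2 * p) (by omega) (by omega)
        (by omega) (by rw [hφ1, hφ2, hφ2p]; omega) ?_)
      intro n hn hlt
      rcases Stmt5Aux.typ_mem p n with h | h | h | h
      · tauto
      · tauto
      · exfalso
        obtain ⟨hne0, hnep, hdvd⟩ := (Stmt5Aux.typ_spec p n hp3).2.2.1 h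
        have := hev n hn hdvd (by omega)
        omega
      · tauto
    · by_contra hodd
      push_neg at hodd
      refine absurd hid (Stmt5Aux.not_ident p hp hp3 V 1 2 p (by omega) (by omega)
        (by omega) (by rw [hφ1, hφ2, hφp]; omega) ?_)
      intro n hn hlt
      rcases Stmt5Aux.typ_mem p n with h | h | h | h
      · tauto
      · tauto
      · tauto
      · exfalso
        obtain ⟨hne0, hnep, hndvd⟩ := (Stmt5Aux.typ_spec p n hp3).2.2.2 h
        have := hodd n hn hndvd (by omega) (by omega)
        exact hnep this
  · rintro ⟨h0, hpv, h1, h2⟩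
    exact Stmt5Aux.ident p hp hp3 V hV h0 hpv h1 h2
end

section
/- Let α₀,…,α_{N−1} ∈ ℂ and let V ∈ ℂ^{N×N} be the Vandermonde matrix with (i,j) entry α_j^i (0 ≤ i,j ≤ N−1). If for all s, s′ ∈ ℂ^N_𝒱 the condition that every entry of V·s − V·s′ is a Gaussian integer implies s = s′ (i.e., every s ∈ ℂ^N_𝒱 can be uniquely recovered from its modulo measurements under the sensing matrix V), then 𝒱_r ⊆ 𝒱, where 𝒱_r = {j ∈ {0,…,N−1} : α_j ∈ ℚ(i)} is the set of indices of nodes that are Gaussian rational numbers. -/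
open Polynomial

/-- A complex number is a Gaussian rational if its real and imaginary parts are rational. -/
def IsGaussianRat (z : ℂ) : Prop := ∃ a b : ℚ, z = (a : ℂ) + (b : ℂ) * Complex.I

lemma gaussRat_mul {z w : ℂ} (hz : IsGaussianRat z) (hw : IsGaussianRat w) :
    IsGaussianRat (z * w) := by
  obtain ⟨a, b, rfl⟩ := hz
  obtain ⟨c, d, rfl⟩ := hw
  refine ⟨a * c - b * d, a * d + b * c, ?_⟩
  push_cast
  ring_nf
  rw [Complex.I_sq]
  ring

lemma gaussRat_pow {z : ℂ} (hz : IsGaussianRat z) (m : ℕ) : IsGaussianRat (z ^ m) := by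
  induction m with
  | zero => exact ⟨1, 0, by norm_num⟩
  | succ k ih => rw [pow_succ]; exact gaussRat_mul ih hz

lemma den_dvd_int_mul (q : ℚ) (d : ℕ) (h : q.den ∣ d) : ∃ k : ℤ, (d : ℚ) * q = k := by
  obtain ⟨t, rfl⟩ := h
  refine ⟨t * q.num, ?_⟩
  have hq : (q.den : ℚ) * q = q.num := by
    rw [mul_comm]; exact_mod_cast Rat.mul_den_eq_num q
  push_cast
  rw [mul_comm (q.den : ℚ), mul_assoc, hq]

/-- if every s ∈ ℂ^N_𝒱 can be uniquely recovered from its modulo measurements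
under the Vandermonde sensing matrix V with nodes α₀,…,α_{N−1}, then every index whose node
is a Gaussian rational lies in 𝒱. -/
theorem stmt6 (N : ℕ) (hN : 0 < N) (α : Fin N → ℂ) (V : Set ℕ) (hV : ∀ n ∈ V, n < N)
    (hident : ∀ s s' : Fin N → ℂ,
      (∀ n : Fin N, (n : ℕ) ∈ V → s n = 0) →
      (∀ n : Fin N, (n : ℕ) ∈ V → s' n = 0) →
      (∀ m : Fin N,
        IsGaussianInt ((Matrix.of fun i j : Fin N => α j ^ (i : ℕ)).mulVec s m -
          (Matrix.of fun i j : Fin N => α j ^ (i : ℕ)).mulVec s' m)) →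
      s = s') :
    ∀ j : Fin N, IsGaussianRat (α j) → (j : ℕ) ∈ V := by
  intro j hj
  by_contra hjV
  -- For each m, α j ^ m is Gaussian rational; choose a m, b m.
  have hpow : ∀ m : Fin N, IsGaussianRat (α j ^ (m : ℕ)) := fun m => gaussRat_pow hj _
  choose a b hab using hpow
  set d : ℕ := ∏ m : Fin N, ((a m).den * (b m).den) with hd
  have hdpos : 0 < d := Finset.prod_pos fun m _ => Nat.mul_pos (a m).pos (b m).pos
  set s : Fin N → ℂ := fun n => if n = j then (d : ℂ) else 0 with hs
  have hzero : ∀ n : Fin N, (n : ℕ) ∈ V → s n = 0 := by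
    intro n hn
    simp only [hs]
    rw [if_neg]
    rintro rfl
    exact hjV hn
  have key : s = 0 := by
    apply hident s 0 hzero (fun _ _ => rfl)
    intro m
    have hmul : (Matrix.of fun i j : Fin N => α j ^ (i : ℕ)).mulVec s m
        = (d : ℂ) * α j ^ (m : ℕ) := by
      simp only [Matrix.mulVec, dotProduct, Matrix.of_apply, hs, mul_ite, mul_zero]
      rw [Finset.sum_ite_eq' Finset.univ j]
      simp [mul_comm]
    have h0 : (Matrix.of fun i j : Fin N => α j ^ (i : ℕ)).mulVec (0 : Fin N → ℂ) m = 0 := by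
      simp [Matrix.mulVec]
    rw [hmul, h0, sub_zero, hab m]
    obtain ⟨k1, hk1⟩ := den_dvd_int_mul (a m) d
      (dvd_trans (dvd_mul_right _ _) (Finset.dvd_prod_of_mem _ (Finset.mem_univ m)))
    obtain ⟨k2, hk2⟩ := den_dvd_int_mul (b m) d
      (dvd_trans (dvd_mul_left _ _) (Finset.dvd_prod_of_mem _ (Finset.mem_univ m)))
    refine ⟨k1, k2, ?_⟩
    have e1 : ((d : ℚ) * a m : ℚ) = (k1 : ℚ) := hk1
    have e2 : ((d : ℚ) * b m : ℚ) = (k2 : ℚ) := hk2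
    have c1 : (d : ℂ) * (a m : ℂ) = (k1 : ℂ) := by exact_mod_cast congrArg (Rat.cast : ℚ → ℂ) e1
    have c2 : (d : ℂ) * (b m : ℂ) = (k2 : ℂ) := by exact_mod_cast congrArg (Rat.cast : ℚ → ℂ) e2
    rw [mul_add, ← mul_assoc, c1, c2]
  have : s j = 0 := by rw [key]; rfl
  simp only [hs, if_pos rfl] at this
  exact absurd this (by exact_mod_cast hdpos.ne')
end

section
/- Let p be a prime number. The polynomial f(X) = X^{p−1} + X^{p−2} + ⋯ + X + 1 is irreducible over the field ℚ(i) of Gaussian rationals; that is, f cannot be written as a product of two nonconstant polynomials with coefficients in ℚ(i). -/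
/-!
Let `ζ` be a primitive `p`-th root of unity. For odd `p`, the field `ℚ(i, ζ)` contains the
primitive `4p`-th root of unity `iζ`, so `[ℚ(i, ζ) : ℚ] ≥ φ(4p) = 2 φ(p)`; since `[ℚ(i) : ℚ] = 2`,
the tower law gives `[ℚ(i)(ζ) : ℚ(i)] ≥ φ(p)`. The minimal polynomial of `ζ` over `ℚ(i)` divides the
cyclotomic polynomial `Φ_p = X^{p-1} + ⋯ + 1`, which has degree `φ(p)`, so the two coincide.
For `p = 2`, `Φ_2 = X + 1` is linear.
-/

open Polynomial IntermediateField

theorem IsPrimitiveRoot.irreducible_cyclotomic_of_totient_le_finrank {K L : Type*} [Field K]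
    [Field L] [Algebra K L] {ζ : L} {n : ℕ} (hζ : IsPrimitiveRoot ζ n) (hn : 0 < n)
    (hdeg : n.totient ≤ Module.finrank K K⟮ζ⟯) : Irreducible (cyclotomic n K) := by
  have hint : IsIntegral K ζ := (hζ.isIntegral hn).tower_top
  have hdvd : minpoly K ζ ∣ cyclotomic n K := by
    refine minpoly.dvd K ζ ?_
    rw [aeval_def, eval₂_eq_eval_map, map_cyclotomic]
    exact hζ.isRoot_cyclotomic hn
  have heq : cyclotomic n K = minpoly K ζ :=
    eq_of_monic_of_dvd_of_natDegree_le (minpoly.monic hint) (cyclotomic.monic n K) hdvd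
      (by rwa [natDegree_cyclotomic, ← adjoin.finrank hint])
  exact heq ▸ minpoly.irreducible hint

theorem IsPrimitiveRoot.irreducible_cyclotomic_adjoin_of_coprime {F : Type*} [Field F]
    [CharZero F] {x y : F} {m n : ℕ} (hx : IsPrimitiveRoot x m) (hy : IsPrimitiveRoot y n)
    (hm : 0 < m) (hn : 0 < n) (hmn : m.Coprime n) : Irreducible (cyclotomic n ℚ⟮x⟯) := by
  set K := ℚ⟮x⟯
  refine hy.irreducible_cyclotomic_of_totient_le_finrank hn ?_
  have hK : Module.finrank ℚ K = m.totient := by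
    rw [adjoin.finrank (hx.isIntegral hm).tower_top, ← cyclotomic_eq_minpoly_rat hx hm,
      natDegree_cyclotomic]
  have : FiniteDimensional ℚ K := adjoin.finiteDimensional (hx.isIntegral hm).tower_top
  have : FiniteDimensional K K⟮y⟯ := adjoin.finiteDimensional (hy.isIntegral hn).tower_top
  have : FiniteDimensional ℚ K⟮y⟯ := FiniteDimensional.trans ℚ K K⟮y⟯
  have hx' : IsPrimitiveRoot (algebraMap K K⟮y⟯ (AdjoinSimple.gen ℚ x)) m :=
    hx.of_map_of_injective (f := algebraMap K⟮y⟯ F) (algebraMap K⟮y⟯ F).injective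
  have hy' : IsPrimitiveRoot (AdjoinSimple.gen K y) n :=
    hy.of_map_of_injective (f := algebraMap K⟮y⟯ F) (algebraMap K⟮y⟯ F).injective
  have : Module.Free K K⟮y⟯ := Module.Free.of_divisionRing K K⟮y⟯
  have hlow := hx'.lcm_totient_le_finrank hy' (cyclotomic.irreducible_rat (Nat.lcm_pos hm hn))
  rw [hmn.lcm_eq_mul, Nat.totient_mul hmn, ← Module.finrank_mul_finrank ℚ K K⟮y⟯, hK] at hlow
  exact Nat.le_of_mul_le_mul_left hlow (Nat.totient_pos.mpr hm)

/-- for a prime p, the polynomial X^{p−1} + X^{p−2} + ⋯ + X + 1 is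
irreducible over the field ℚ(i) of Gaussian rationals. -/
theorem stmt8 (p : ℕ) (hp : p.Prime) :
    Irreducible (∑ i ∈ Finset.range p, (X : Polynomial ℚ⟮Complex.I⟯) ^ i) := by
  have := Fact.mk hp
  rw [← cyclotomic_prime]
  obtain rfl | hp2 := eq_or_ne p 2
  · exact irreducible_of_degree_eq_one (by rw [cyclotomic_two]; exact degree_X_add_C 1)
  have hcop : Nat.Coprime (2 ^ 2) p :=
    Nat.Coprime.pow_left 2 ((Nat.coprime_primes Nat.prime_two hp).mpr hp2.symm)
  exact Complex.isPrimitiveRoot_I.irreducible_cyclotomic_adjoin_of_coprime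
    (Complex.isPrimitiveRoot_exp p hp.ne_zero) (by norm_num) hp.pos hcop
end

section
/- Let m be a nonnegative integer. Each of the polynomials X^{2^m} − i and X^{2^m} + i is irreducible over the field ℚ(i) of Gaussian rationals. -/
/-!
A root `ζ` of `X^(2^m) ∓ i` is a primitive `2^(m+2)`-th root of unity, so `[ℚ(ζ) : ℚ] = 2^(m+1)`.
Since `±i` is a power of `ζ`, the tower `ℚ ⊆ ℚ(i) ⊆ ℚ(ζ)` gives `[ℚ(i)(ζ) : ℚ(i)] = 2^m`: the
minimal polynomial of `ζ` over `ℚ(i)` has the same degree as the monic `X^(2^m) ∓ i` it divides,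
hence equals it.
-/

open Polynomial IntermediateField

theorem Polynomial.Monic.irreducible_of_aeval_eq_zero_of_natDegree_le
    {K L : Type*} [Field K] [Field L] [Algebra K L] {f : K[X]} (hf : f.Monic) {x : L}
    (hx : aeval x f = 0) (hdeg : f.natDegree ≤ (minpoly K x).natDegree) : Irreducible f := by
  have hint : IsIntegral K x := ⟨f, hf, hx⟩
  rw [eq_of_monic_of_dvd_of_natDegree_le (minpoly.monic hint) hf (minpoly.dvd K x hx) hdeg]
  exact minpoly.irreducible hint

theorem IntermediateField.finrank_mul_natDegree_minpoly {F E : Type*} [Field F] [Field E]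
    [Algebra F E] {K : IntermediateField F E} {x : E} (hx : IsIntegral F x) (hK : K ≤ F⟮x⟯) :
    Module.finrank F K * (minpoly K x).natDegree = (minpoly F x).natDegree := by
  rw [← adjoin.finrank hx, ← adjoin.finrank hx.tower_top, ← extendScalars_adjoin hK]
  exact Module.finrank_mul_finrank F K (extendScalars hK)

theorem IsPrimitiveRoot.natDegree_minpoly_rat {L : Type*} [Field L] [CharZero L] {n : ℕ}
    {ζ : L} (hζ : IsPrimitiveRoot ζ n) (hn : 0 < n) : (minpoly ℚ ζ).natDegree = n.totient := by
  rw [← cyclotomic_eq_minpoly_rat hζ hn, natDegree_cyclotomic]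

theorem IsPrimitiveRoot.of_pow_eq_prime_pow {M : Type*} [CommMonoid M] {p k m : ℕ}
    [hp : Fact p.Prime] {c ζ : M} (hc : IsPrimitiveRoot c (p ^ (k + 1))) (hζ : ζ ^ p ^ m = c) :
    IsPrimitiveRoot ζ (p ^ (m + k + 1)) := by
  rw [IsPrimitiveRoot.iff_orderOf]
  apply orderOf_eq_prime_pow
  · rw [pow_add, pow_mul, hζ]
    exact hc.pow_ne_one_of_pos_of_lt (pow_ne_zero _ hp.out.ne_zero)
      (Nat.pow_lt_pow_right hp.out.one_lt k.lt_succ_self)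
  · rw [add_assoc, pow_add, pow_mul, hζ, hc.pow_eq_one]

theorem irreducible_X_pow_prime_pow_sub_C_of_isPrimitiveRoot {L : Type*} [Field L] [CharZero L]
    {p k : ℕ} [hp : Fact p.Prime] {μ : L} (hμ : IsPrimitiveRoot μ (p ^ (k + 1))) {c : ℚ⟮μ⟯}
    (hc : IsPrimitiveRoot (c : L) (p ^ (k + 1))) (m : ℕ) {ζ : L} (hζ : ζ ^ p ^ m = c) :
    Irreducible (X ^ p ^ m - C c) := by
  have hpos : ∀ j, 0 < p ^ j := fun j => pow_pos hp.out.pos j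
  have hζprim : IsPrimitiveRoot ζ (p ^ (m + k + 1)) := hc.of_pow_eq_prime_pow hζ
  have hμle : ℚ⟮μ⟯ ≤ ℚ⟮ζ⟯ := by
    obtain ⟨i, -, hi⟩ := hc.eq_pow_of_pow_eq_one hμ.pow_eq_one
    rw [adjoin_simple_le_iff, ← hi, ← hζ]
    exact pow_mem (pow_mem (mem_adjoin_simple_self ℚ ζ) _) _
  have htower := finrank_mul_natDegree_minpoly (hζprim.isIntegral (hpos _)).tower_top hμle
  rw [adjoin.finrank (hμ.isIntegral (hpos _)).tower_top, hμ.natDegree_minpoly_rat (hpos _),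
    hζprim.natDegree_minpoly_rat (hpos _), Nat.totient_prime_pow_succ hp.out,
    Nat.totient_prime_pow_succ hp.out] at htower
  have hdeg : (minpoly ℚ⟮μ⟯ ζ).natDegree = p ^ m :=
    Nat.eq_of_mul_eq_mul_left (Nat.mul_pos (hpos k) (Nat.sub_pos_of_lt hp.out.one_lt))
      (by rw [htower, pow_add]; ring)
  refine (monic_X_pow_sub_C c (hpos m).ne').irreducible_of_aeval_eq_zero_of_natDegree_le
    (x := ζ) ?_ (by rw [natDegree_X_pow_sub_C, hdeg])
  simp [hζ]

/-- for a nonnegative integer m, each of X^{2^m} − i and X^{2^m} + i is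
irreducible over the field ℚ(i) of Gaussian rationals. -/
theorem stmt9 (m : ℕ) :
    Irreducible ((X : Polynomial ℚ⟮Complex.I⟯) ^ (2 ^ m) -
      C (⟨Complex.I, IntermediateField.mem_adjoin_simple_self ℚ Complex.I⟩ : ℚ⟮Complex.I⟯)) ∧
    Irreducible ((X : Polynomial ℚ⟮Complex.I⟯) ^ (2 ^ m) +
      C (⟨Complex.I, IntermediateField.mem_adjoin_simple_self ℚ Complex.I⟩ : ℚ⟮Complex.I⟯)) := by
  have key : ∀ c : ℚ⟮Complex.I⟯, IsPrimitiveRoot (c : ℂ) 4 → Irreducible (X ^ 2 ^ m - C c) := by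
    intro c hc
    obtain ⟨ζ, hζ⟩ := IsAlgClosed.exists_pow_nat_eq (c : ℂ) (pow_pos two_pos m)
    exact irreducible_X_pow_prime_pow_sub_C_of_isPrimitiveRoot (p := 2) (k := 1)
      Complex.isPrimitiveRoot_I hc m hζ
  refine ⟨key _ Complex.isPrimitiveRoot_I, ?_⟩
  simpa only [map_neg, sub_neg_eq_add] using key (-_) Complex.isPrimitiveRoot_neg_I
end

section
/- Let p be a prime number. The polynomial f(X) = X^{p−1} + X^{p−2} + ⋯ + X + 1 is irreducible as an element of ℤ[i][X], the ring of polynomials over the Gaussian integers. -/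
/-!
The polynomial is the cyclotomic polynomial `Φ_p`. For `p = 2` it has degree one. For odd `p`,
the rational integer `p` is squarefree in `ℤ[i]` (odd primes do not ramify), so any Gaussian prime
`π ∣ p` satisfies `π² ∤ p`. Eisenstein's criterion for `Φ_p(X + 1)` at `p` over `ℤ` then transfers
to Eisenstein's criterion at `π` over `ℤ[i]`.
-/

open Polynomial

theorem Polynomial.IsEisensteinAt.map {R S : Type*} [CommRing R] [CommRing S] {f : R[X]}
    {P : Ideal R} {Q : Ideal S} (hf : f.IsEisensteinAt P) (φ : R →+* S) (hPQ : P.map φ ≤ Q)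
    (hlead : φ f.leadingCoeff ∉ Q) (h0 : φ (f.coeff 0) ∉ Q ^ 2) :
    (f.map φ).IsEisensteinAt Q := by
  have hlead0 : φ f.leadingCoeff ≠ 0 := fun h => hlead (h ▸ Q.zero_mem)
  refine ⟨?_, fun hn => hPQ ?_, by rwa [coeff_map]⟩
  · rwa [leadingCoeff_map_of_leadingCoeff_ne_zero φ hlead0]
  · exact (hf.isWeaklyEisensteinAt.map φ).mem hn

theorem Polynomial.irreducible_cyclotomic_prime_of_mem_of_notMem_sq {R : Type*} [CommRing R]
    [IsDomain R] {p : ℕ} [Fact p.Prime] {Q : Ideal R} (hQ : Q.IsPrime) (hpQ : (p : R) ∈ Q)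
    (hpQ2 : (p : R) ∉ Q ^ 2) : Irreducible (cyclotomic p R) := by
  set φ := Int.castRingHom R
  have hmonic : ((cyclotomic p ℤ).comp (X + 1)).Monic := by
    simpa using (cyclotomic.monic p ℤ).comp (monic_X_add_C 1)
      (by rw [natDegree_X_add_C]; exact one_ne_zero)
  have hE : (((cyclotomic p ℤ).comp (X + 1)).map φ).IsEisensteinAt Q := by
    refine (cyclotomic_comp_X_add_one_isEisensteinAt p).map φ ?_ ?_ ?_
    · rw [Ideal.submodule_span_eq, Ideal.map_span, Set.image_singleton, Ideal.span_le,
        Set.singleton_subset_iff]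
      simpa [φ] using hpQ
    · simpa [hmonic.leadingCoeff] using (Ideal.ne_top_iff_one Q).1 hQ.ne_top
    · simpa [coeff_zero_eq_eval_zero, eval_one_cyclotomic_prime, φ] using hpQ2
  rw [← MulEquiv.irreducible_iff (algEquivAevalXAddC (1 : R)), algEquivAevalXAddC_apply,
    ← comp_eq_aeval, ← map_cyclotomic_int,
    show (X + C 1 : R[X]) = (X + 1 : ℤ[X]).map φ by simp, ← map_comp]
  refine hE.irreducible hQ (hmonic.map φ).isPrimitive ?_
  rw [hmonic.natDegree_map, natDegree_comp, ← C_1, natDegree_X_add_C, mul_one,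
    natDegree_cyclotomic, Nat.totient_prime Fact.out]
  exact Nat.sub_pos_of_lt (Fact.out : p.Prime).one_lt

theorem Prime.dvd_of_dvd_intCast_of_not_isUnit {R : Type*} [CommRing R] {p n : ℤ} (hp : Prime p)
    {x : R} (hx : ¬IsUnit x) (hxp : x ∣ (p : R)) (hxn : x ∣ (n : R)) : p ∣ n := by
  by_contra hpn
  exact hx ((((hp.coprime_iff_not_dvd).2 hpn).intCast (R := R)).isUnit_of_dvd' hxp hxn)

namespace GaussianInt

theorem dvd_two_mul_re_of_dvd_star {x : GaussianInt} (h : x ∣ star x) :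
    x ∣ ((2 * x.re : ℤ) : GaussianInt) := by
  have : x + star x = ((2 * x.re : ℤ) : GaussianInt) := by ext <;> simp [two_mul]
  exact this ▸ dvd_add dvd_rfl h

theorem dvd_two_mul_im_of_dvd_star {x : GaussianInt} (h : x ∣ star x) :
    x ∣ ((2 * x.im : ℤ) : GaussianInt) := by
  have : (x - star x) * ⟨0, -1⟩ = ((2 * x.im : ℤ) : GaussianInt) := by ext <;> simp [two_mul]
  exact this ▸ (dvd_sub dvd_rfl h).mul_right _

theorem norm_eq_of_mul_self_dvd_of_not_isUnit {p : ℕ} (hp : p.Prime) {x : GaussianInt}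
    (hxx : x * x ∣ ((p : ℤ) : GaussianInt)) (hx : ¬IsUnit x) : x.norm = p := by
  have hsq : x.norm.natAbs ^ 2 ∣ p ^ 2 := by
    simpa [sq, Int.natAbs_mul, Zsqrtd.normMonoidHom, Zsqrtd.norm_intCast] using
      Int.natAbs_dvd_natAbs.2 (map_dvd Zsqrtd.normMonoidHom hxx)
  rcases hp.eq_one_or_self_of_dvd _ ((Nat.pow_dvd_pow_iff two_ne_zero).1 hsq) with h1 | hxp
  · exact absurd (Zsqrtd.norm_eq_one_iff.1 h1) hx
  · rw [← abs_natCast_norm, hxp]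

theorem squarefree_natCast_of_prime {p : ℕ} (hp : p.Prime) (hp2 : p ≠ 2) :
    Squarefree (p : GaussianInt) := by
  intro x hxx
  by_contra hx
  rw [← Int.cast_natCast] at hxx
  have hnorm := norm_eq_of_mul_self_dvd_of_not_isUnit hp hxx hx
  have hx0 : x ≠ 0 := by
    rintro rfl
    exact hp.ne_zero (by simpa using hnorm.symm)
  have hpx : ((p : ℤ) : GaussianInt) = x * star x := by rw [← hnorm, Zsqrtd.norm_eq_mul_conj]
  have hstar : x ∣ star x := by rwa [← mul_dvd_mul_iff_left hx0, ← hpx]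
  have hpZ : Prime (p : ℤ) := Nat.prime_iff_prime_int.1 hp
  -- a non-unit common divisor of `p` and `2 n` forces `p ∣ n`; applied to `2 re x` and `2 im x`
  -- this gives `p ∣ x`, whence `p² ∣ x² ∣ p`
  have hdvd_of_dvd_two_mul (n : ℤ) (hn : x ∣ ((2 * n : ℤ) : GaussianInt)) : (p : ℤ) ∣ n :=
    (hpZ.dvd_or_dvd (hpZ.dvd_of_dvd_intCast_of_not_isUnit hx (hpx ▸ dvd_mul_right x _) hn)
      ).resolve_left fun h => hp2 ((Nat.prime_dvd_prime_iff_eq hp Nat.prime_two).1 (mod_cast h))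
  have hp_dvd_x : ((p : ℤ) : GaussianInt) ∣ x := (Zsqrtd.intCast_dvd _ _).2
    ⟨hdvd_of_dvd_two_mul _ (dvd_two_mul_re_of_dvd_star hstar),
      hdvd_of_dvd_two_mul _ (dvd_two_mul_im_of_dvd_star hstar)⟩
  have hpp : ((p : ℤ) : GaussianInt) * (p : ℤ) ∣ ((p : ℤ) : GaussianInt) * (1 : ℤ) := by
    rw [Int.cast_one, mul_one]
    exact (mul_dvd_mul hp_dvd_x hp_dvd_x).trans hxx
  rw [mul_dvd_mul_iff_left (mod_cast hp.ne_zero), Zsqrtd.intCast_dvd_intCast] at hpp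
  exact hpZ.not_dvd_one hpp

end GaussianInt

/-- for a prime p, the polynomial X^{p−1} + X^{p−2} + ⋯ + X + 1 is
irreducible as an element of ℤ[i][X], the polynomial ring over the Gaussian integers. -/
theorem stmt10 (p : ℕ) (hp : p.Prime) :
    Irreducible (∑ i ∈ Finset.range p, (X : Polynomial GaussianInt) ^ i) := by
  have := Fact.mk hp
  rw [← cyclotomic_prime]
  rcases eq_or_ne p 2 with rfl | hp2
  · rw [cyclotomic_two, ← C_1]
    exact (monic_X_add_C 1).irreducible_of_degree_eq_one (degree_X_add_C 1)
  have hp_unit : ¬IsUnit (p : GaussianInt) := fun h => hp.one_lt.ne' (by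
    simpa [Zsqrtd.norm_natCast, Int.natAbs_mul] using Zsqrtd.norm_eq_one_iff.2 h)
  obtain ⟨π, hπ, hπp⟩ := WfDvdMonoid.exists_irreducible_factor hp_unit (mod_cast hp.ne_zero)
  refine irreducible_cyclotomic_prime_of_mem_of_notMem_sq
    ((Ideal.span_singleton_prime hπ.ne_zero).2 hπ.prime) (Ideal.mem_span_singleton.2 hπp) ?_
  rw [Ideal.span_singleton_pow, Ideal.mem_span_singleton, sq]
  exact fun h => hπ.not_isUnit (GaussianInt.squarefree_natCast_of_prime hp hp2 π h)
end

section
/- Let m be a positive integer. Each of the polynomials X^{2^m} − i and X^{2^m} + i is irreducible as an element of ℤ[i][X], the ring of polynomials over the Gaussian integers. -/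
open Polynomial

lemma gi_pi_prime : Prime (⟨1, 1⟩ : GaussianInt) := by
  rw [← UniqueFactorizationMonoid.irreducible_iff_prime]
  constructor
  · rw [← Zsqrtd.norm_eq_one_iff]
    decide
  · intro a b hab
    have hn : a.norm.natAbs * b.norm.natAbs = 2 := by
      rw [← Int.natAbs_mul, ← Zsqrtd.norm_mul, ← hab]; rfl
    have hd : a.norm.natAbs ∣ 2 := ⟨b.norm.natAbs, hn.symm⟩
    rcases (Nat.Prime.eq_one_or_self_of_dvd Nat.prime_two _ hd) with h | h
    · left; exact Zsqrtd.norm_eq_one_iff.mp h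
    · right; rw [h] at hn; exact Zsqrtd.norm_eq_one_iff.mp (by omega)

lemma gi_key (c : GaussianInt) (h1 : (⟨1, 1⟩ : GaussianInt) ∣ 1 + c)
    (h2 : ¬ ((⟨1, 1⟩ : GaussianInt) ^ 2 ∣ 1 + c)) (m : ℕ) (hm : 0 < m) :
    Irreducible ((X : Polynomial GaussianInt) ^ (2 ^ m) + C c) := by
  set π : GaussianInt := ⟨1, 1⟩
  set n : ℕ := 2 ^ m with hn
  have hn1 : 1 < n := Nat.one_lt_two_pow_iff.mpr (by omega)
  set f : Polynomial GaussianInt := X ^ n + C c with hf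
  set g : Polynomial GaussianInt := (X + C 1) ^ n + C c with hg
  have hcomp : (algEquivAevalXAddC (1 : GaussianInt)) f = g := by
    simp [f, g, algEquivAevalXAddC_apply, map_add, map_pow, aeval_X, aeval_C]
  have hdp : ((X + C (1 : GaussianInt)) ^ n).degree = (n : WithBot ℕ) := by
    rw [degree_pow, degree_X_add_C]
    simp
  have hlt : (C c).degree < ((X + C (1 : GaussianInt)) ^ n).degree := by
    rw [hdp]
    exact lt_of_le_of_lt degree_C_le (by exact_mod_cast (by omega : (0:ℕ) < n))
  have hmonic : g.Monic :=
    ((monic_X_add_C (1 : GaussianInt)).pow n).add_of_left hlt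
  have hdeg : g.degree = n := by
    rw [hg, degree_add_eq_left_of_degree_lt hlt, hdp]
  have hcoeff : ∀ k : ℕ, (k : WithBot ℕ) < g.degree → g.coeff k ∈ Ideal.span {π} := by
    intro k hk
    rw [hdeg] at hk
    have hkn : k < n := by exact_mod_cast hk
    rw [Ideal.mem_span_singleton]
    have hC1 : (C (1 : GaussianInt)) = 1 := map_one C
    rw [hg, hC1, coeff_add, coeff_X_add_one_pow]
    rcases Nat.eq_zero_or_pos k with rfl | hk0
    · simpa using h1
    · rw [coeff_C, if_neg (by omega)]
      have h2d : (2 : GaussianInt) ∣ (n.choose k : GaussianInt) := by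
        have : (2 : ℕ) ∣ n.choose k :=
          Nat.Prime.dvd_choose_pow Nat.prime_two (by omega) (by omega)
        exact_mod_cast Nat.cast_dvd_cast (α := GaussianInt) this
      refine dvd_trans ?_ (by simpa using h2d)
      exact ⟨⟨1, -1⟩, by decide⟩
  have hPprime : (Ideal.span {π}).IsPrime :=
    (Ideal.span_singleton_prime (by decide)).mpr gi_pi_prime
  have hirr : Irreducible g := by
    apply Polynomial.irreducible_of_eisenstein_criterion hPprime
    · rw [hmonic.leadingCoeff, Ideal.mem_span_singleton]
      intro h
      exact gi_pi_prime.not_unit (isUnit_of_dvd_one h)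
    · exact hcoeff
    · rw [hdeg]; exact_mod_cast (by omega : (0:ℕ) < n)
    · rw [Ideal.span_singleton_pow, Ideal.mem_span_singleton]
      have : g.coeff 0 = 1 + c := by
        have hC1 : (C (1 : GaussianInt)) = 1 := map_one C
        rw [hg, hC1, coeff_add, coeff_X_add_one_pow, coeff_C, if_pos rfl]
        simp
      rw [this]
      exact h2
    · exact hmonic.isPrimitive
  rw [← hcomp] at hirr
  exact hirr.of_map

/-- for a positive integer m, each of X^{2^m} − i and X^{2^m} + i is
irreducible as an element of ℤ[i][X], the polynomial ring over the Gaussian integers;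
here i = ⟨0, 1⟩ is the imaginary unit of the Gaussian integers. -/
theorem stmt11 (m : ℕ) (hm : 0 < m) :
    Irreducible ((X : Polynomial GaussianInt) ^ (2 ^ m) - C (⟨0, 1⟩ : GaussianInt)) ∧
    Irreducible ((X : Polynomial GaussianInt) ^ (2 ^ m) + C (⟨0, 1⟩ : GaussianInt)) := by
  constructor
  · have : (X : Polynomial GaussianInt) ^ (2 ^ m) - C (⟨0, 1⟩ : GaussianInt)
        = X ^ (2 ^ m) + C (⟨0, -1⟩ : GaussianInt) := by
      rw [sub_eq_add_neg, ← C_neg]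
      congr 1
    rw [this]
    apply gi_key _ ?_ ?_ m hm
    · exact ⟨⟨0, -1⟩, by decide⟩
    · intro ⟨z, hz⟩
      have : ((⟨1,1⟩ : GaussianInt) ^ 2).norm ∣ ((1 : GaussianInt) + ⟨0,-1⟩).norm :=
        ⟨z.norm, by rw [hz, Zsqrtd.norm_mul]⟩
      revert this
      decide
  · apply gi_key _ ?_ ?_ m hm
    · exact ⟨1, by decide⟩
    · intro ⟨z, hz⟩
      have : ((⟨1,1⟩ : GaussianInt) ^ 2).norm ∣ ((1 : GaussianInt) + ⟨0,1⟩).norm :=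
        ⟨z.norm, by rw [hz, Zsqrtd.norm_mul]⟩
      revert this
      decide
end
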